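/- arXiv:2109.06685 — 7 statements merged into one kernel-verified Lean document; each statement's English description precedes it below -/
import Mathlib

section
/- Let q and q′ be Lorentzian quadratic forms on a real vector space V of dimension n+1 (n ≥ 1), and assume q ⪯ q′, i.e. the open light cone of q is contained in that of q′. Then for every c ∈ [0,1] the convex combination (1−c)·q + c·q′ is again a Lorentzian quadratic form on V, i.e. it is equivalent to the standard Minkowski form of signature (−,+,…,+). (Pointwise content of Theorem 2.9(1) on convex interpolation of Lorentzian metrics.) -/
/-- The standard Minkowski quadratic form of signature `(-,+,…,+)` on `ℝ^(n+1)`. -/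
def mink (n : ℕ) (x : Fin (n + 1) → ℝ) : ℝ :=
  ∑ i, (if i = 0 then (-1 : ℝ) else 1) * x i ^ 2

/-- A function `f : V → ℝ` is Lorentzian if it is equivalent (isometric) to the
standard Minkowski quadratic form on `ℝ^(n+1)`. -/
def IsLorentzian {V : Type*} [AddCommGroup V] [Module ℝ V] (n : ℕ) (f : V → ℝ) : Prop :=
  ∃ e : (Fin (n + 1) → ℝ) ≃ₗ[ℝ] V, ∀ x, f (e x) = mink n x

open QuadraticMap Finset

lemma mink_nonneg_of_zero {n : ℕ} {x : Fin (n + 1) → ℝ} (hx : x 0 = 0) : 0 ≤ mink n x := by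
  unfold mink
  apply Finset.sum_nonneg
  intro i _
  rcases eq_or_ne i 0 with h | h
  · simp [h, hx]
  · rw [if_neg h, one_mul]
    positivity

lemma eq_zero_of_mink {n : ℕ} {x : Fin (n + 1) → ℝ} (hx0 : x 0 = 0) (h : mink n x ≤ 0) :
    x = 0 := by
  have hterm : ∀ i ∈ Finset.univ, 0 ≤ (if i = (0 : Fin (n + 1)) then (-1 : ℝ) else 1) * x i ^ 2 := by
    intro i _
    rcases eq_or_ne i 0 with hh | hh
    · simp [hh, hx0]
    · simp only [if_neg hh]
      positivity
  have hsum : mink n x = 0 := le_antisymm h (Finset.sum_nonneg hterm)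
  funext i
  have hz := (Finset.sum_eq_zero_iff_of_nonneg hterm).mp hsum i (Finset.mem_univ i)
  rcases eq_or_ne i 0 with hh | hh
  · simp [hh, hx0]
  · simp only [if_neg hh, one_mul, pow_eq_zero_iff, two_ne_zero] at hz
    simpa using hz

lemma exists_timelike {n : ℕ} {V : Type*} [AddCommGroup V] [Module ℝ V] {f : V → ℝ}
    (hq : IsLorentzian n f) : ∃ v, f v < 0 := by
  obtain ⟨e, he⟩ := hq
  refine ⟨e (Pi.single 0 1), ?_⟩
  rw [he]
  unfold mink
  rw [Finset.sum_eq_single 0]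
  · simp
  · intro i _ hi
    simp [Pi.single_eq_of_ne hi]
  · simp

lemma le_zero_of_closure {n : ℕ} {V : Type*} [AddCommGroup V] [Module ℝ V]
    {q q' : QuadraticForm ℝ V} (hq : IsLorentzian n ⇑q)
    (hle : {v : V | q v < 0} ⊆ {v : V | q' v < 0}) {z : V} (hz : q z ≤ 0) : q' z ≤ 0 := by
  obtain ⟨e, he⟩ := hq
  set x := e.symm z with hxdef
  have hez : e x = z := e.apply_symm_apply z
  have hmx : mink n x ≤ 0 := by rw [← he, hez]; exact hz
  by_cases hx0 : x 0 = 0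
  · have hx : x = 0 := eq_zero_of_mink hx0 hmx
    have : z = 0 := by rw [← hez, hx, map_zero]
    simp [this]
  · set d := e ((Pi.single 0 (x 0) : Fin (n+1) → ℝ)) with hddef
    have hsum : ∀ t : ℝ, mink n (x + t • (Pi.single 0 (x 0) : Fin (n+1) → ℝ)) =
        mink n x + (-(2 * t + t ^ 2) * (x 0) ^ 2) := by
      intro t
      have hterm : ∀ i : Fin (n + 1),
          (if i = 0 then (-1 : ℝ) else 1) * ((x + t • (Pi.single 0 (x 0) : Fin (n+1) → ℝ)) i) ^ 2
            = (if i = 0 then (-1 : ℝ) else 1) * x i ^ 2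
              + (if i = (0 : Fin (n + 1)) then -(2 * t + t ^ 2) * (x 0) ^ 2 else 0) := by
        intro i
        rcases eq_or_ne i 0 with hh | hh
        · subst hh
          simp [Pi.single_eq_same]
          ring
        · simp [Pi.single_eq_of_ne hh, hh]
      unfold mink
      rw [Finset.sum_congr rfl (fun i _ => hterm i), Finset.sum_add_distrib]
      simp
    have hneg : ∀ t : ℝ, 0 < t → q' (z + t • d) < 0 := by
      intro t ht
      apply hle
      show q (z + t • d) < 0
      have hzd : z + t • d = e (x + t • (Pi.single 0 (x 0) : Fin (n+1) → ℝ)) := by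
        rw [map_add, _root_.map_smul, hez]
      rw [hzd, he, hsum t]
      have hx2 : 0 < (x 0) ^ 2 := by positivity
      nlinarith
    have hpoly : ∀ t : ℝ, q' (z + t • d)
        = q' z + t * polar ⇑q' z d + t * t * q' d := by
      intro t
      have h1 : q' (z + t • d) = q' z + q' (t • d) + polar ⇑q' z (t • d) := by
        rw [polar]; ring
      rw [h1, polar_smul_right, QuadraticMap.map_smul]
      simp only [smul_eq_mul]
      ring
    have hlim : Filter.Tendsto (fun t : ℝ => q' z + t * polar ⇑q' z d + t * t * q' d)
        (nhdsWithin 0 (Set.Ioi 0)) (nhds (q' z)) := by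
      have hc : Continuous fun t : ℝ => q' z + t * polar ⇑q' z d + t * t * q' d := by
        continuity
      have := (hc.tendsto 0).mono_left (nhdsWithin_le_nhds (s := Set.Ioi (0:ℝ)))
      simpa using this
    refine le_of_tendsto hlim ?_
    filter_upwards [self_mem_nhdsWithin] with t ht
    rw [← hpoly t]
    exact (hneg t ht).le

lemma no_semidef_plane {n : ℕ} {V : Type*} [AddCommGroup V] [Module ℝ V]
    {q' : QuadraticForm ℝ V} (hq' : IsLorentzian n ⇑q') {v u : V} (hv : q' v < 0)
    (hind : ∀ r : ℝ, u ≠ r • v)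
    (hplane : ∀ s t : ℝ, q' (s • v + t • u) ≤ 0) : False := by
  obtain ⟨e, he⟩ := hq'
  set x := e.symm v with hxdef
  set y := e.symm u with hydef
  have hex : e x = v := e.apply_symm_apply v
  have hey : e y = u := e.apply_symm_apply u
  have hmx : mink n x < 0 := by rw [← he, hex]; exact hv
  have hx0 : x 0 ≠ 0 := by
    intro h0
    exact absurd hmx (not_lt.mpr (mink_nonneg_of_zero h0))
  have hkey : ∀ s t : ℝ, mink n (s • x + t • y) ≤ 0 := by
    intro s t
    have h := hplane s t
    rwa [show s • v + t • u = e (s • x + t • y) by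
      rw [map_add, _root_.map_smul, _root_.map_smul, hex, hey], he] at h
  set z : Fin (n + 1) → ℝ := (y 0) • x + (-(x 0)) • y with hzdef
  have hz0 : z 0 = 0 := by
    simp only [hzdef, Pi.add_apply, Pi.smul_apply, smul_eq_mul]
    ring
  have hz : z = 0 := eq_zero_of_mink hz0 (hkey (y 0) (-(x 0)))
  have hyx : y = (y 0 / x 0) • x := by
    funext i
    have hzi : y 0 * x i + (-(x 0)) * y i = 0 := by
      have := congrFun hz i
      simpa [hzdef] using this
    simp only [Pi.smul_apply, smul_eq_mul]
    field_simp
    linarith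
  refine hind (y 0 / x 0) ?_
  calc u = e y := hey.symm
    _ = e ((y 0 / x 0) • x) := by rw [← hyx]
    _ = (y 0 / x 0) • v := by rw [_root_.map_smul, hex]

set_option maxHeartbeats 2000000 in
/-- Pointwise content of Theorem 2.9(1): if `q ⪯ q′` are Lorentzian quadratic forms on a
real vector space `V` of dimension `n+1`, then every convex combination
`(1−c)·q + c·q′`, `c ∈ [0,1]`, is again Lorentzian. -/
theorem convexCombination_isLorentzian {n : ℕ} (hn : 1 ≤ n)
    {V : Type*} [AddCommGroup V] [Module ℝ V]
    (q q' : QuadraticForm ℝ V)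
    (hq : IsLorentzian n ⇑q) (hq' : IsLorentzian n ⇑q')
    (hle : {v : V | q v < 0} ⊆ {v : V | q' v < 0})
    (c : ℝ) (hc : c ∈ Set.Icc (0 : ℝ) 1) :
    IsLorentzian n ⇑((1 - c) • q + c • q') := by
  obtain ⟨hc0, hc1⟩ := hc
  rcases eq_or_lt_of_le hc0 with hczero | hcpos
  · obtain ⟨e, he⟩ := hq
    exact ⟨e, fun x => by
      simp [← hczero, QuadraticMap.add_apply, QuadraticMap.smul_apply, smul_eq_mul, he x]⟩
  rcases eq_or_lt_of_le hc1 with hcone | hclt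
  · obtain ⟨e, he⟩ := hq'
    exact ⟨e, fun x => by
      simp [hcone, QuadraticMap.add_apply, QuadraticMap.smul_apply, smul_eq_mul, he x]⟩
  set Q : QuadraticForm ℝ V := (1 - c) • q + c • q' with hQdef
  have hQapp : ∀ x, Q x = (1 - c) * q x + c * q' x := fun x => by
    simp [hQdef, QuadraticMap.add_apply, QuadraticMap.smul_apply, smul_eq_mul]
  have h1c : 0 < 1 - c := by linarith
  have hQle : ∀ z : V, Q z ≤ 0 → q' z ≤ 0 := by
    intro z hz
    rcases le_or_gt (q z) 0 with h | h
    · exact le_zero_of_closure hq hle h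
    · nlinarith [hQapp z]
  have hQlt : ∀ z : V, Q z < 0 → q' z < 0 := by
    intro z hz
    by_contra hq'z
    push_neg at hq'z
    have hqz : q z < 0 := by nlinarith [hQapp z]
    exact absurd (hle hqz) (not_lt.mpr hq'z)
  obtain ⟨v, hv⟩ := exists_timelike hq
  have hv' : q' v < 0 := hle hv
  have hQv : Q v < 0 := by rw [hQapp]; nlinarith
  obtain ⟨e, he⟩ := hq
  haveI : FiniteDimensional ℝ V := LinearEquiv.finiteDimensional e
  have hrank : Module.finrank ℝ V = n + 1 := by
    rw [← e.finrank_eq]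
    exact Module.finrank_fin_fun ℝ
  obtain ⟨w, hw, ⟨iso⟩⟩ := Q.equivalent_one_zero_neg_one_weighted_sum_squared
  set κ : Fin (n + 1) ≃ Fin (Module.finrank ℝ V) := finCongr hrank.symm with hκdef
  set w' : Fin (n + 1) → ℝ := w ∘ κ with hw'def
  have hw'3 : ∀ i, w' i = -1 ∨ w' i = 0 ∨ w' i = 1 := fun i => hw (κ i)
  set G : V ≃ₗ[ℝ] (Fin (n + 1) → ℝ) :=
    iso.toLinearEquiv.trans (LinearEquiv.funCongrLeft ℝ ℝ κ) with hGdef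
  have hG : ∀ x : V, Q x = ∑ j, w' j * (G x j) ^ 2 := by
    intro x
    have h1 : Q x = weightedSumSquares ℝ w (iso x) := (iso.map_app x).symm
    rw [h1, QuadraticMap.weightedSumSquares_apply, ← Equiv.sum_comp κ]
    apply Finset.sum_congr rfl
    intro j _
    have hGj : G x j = iso x (κ j) := rfl
    rw [hGj]
    simp only [hw'def, Function.comp_apply, smul_eq_mul]
    ring
  -- step (a): there is a -1 weight
  have hexneg : ∃ i, w' i = -1 := by
    by_contra hno
    push_neg at hno
    have hge : 0 ≤ Q v := by
      rw [hG v]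
      apply Finset.sum_nonneg
      intro j _
      rcases hw'3 j with h | h | h
      · exact absurd h (hno j)
      · simp [h]
      · rw [h]; positivity
    linarith
  obtain ⟨i₀, hi₀⟩ := hexneg
  -- step (b): uniqueness of the -1 weight
  have huniq : ∀ i, w' i = -1 → i = i₀ := by
    intro i₁ hi₁
    by_contra hne
    set a : V := G.symm (Pi.single i₀ 1) with hadef
    set b : V := G.symm (Pi.single i₁ 1) with hbdef
    have hcomb : ∀ s t : ℝ, Q (s • a + t • b) = -(s ^ 2 + t ^ 2) := by
      intro s t
      have hGab : G (s • a + t • b)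
          = s • (Pi.single i₀ 1 : Fin (n+1) → ℝ) + t • (Pi.single i₁ 1 : Fin (n+1) → ℝ) := by
        rw [map_add, _root_.map_smul, _root_.map_smul, hadef, hbdef,
          G.apply_symm_apply, G.apply_symm_apply]
      rw [hG, hGab]
      have hterm : ∀ j : Fin (n + 1),
          w' j * ((s • (Pi.single i₀ 1 : Fin (n+1) → ℝ)
            + t • (Pi.single i₁ 1 : Fin (n+1) → ℝ)) j) ^ 2
            = (if j = i₀ then -s ^ 2 else 0) + (if j = i₁ then -t ^ 2 else 0) := by
        intro j
        rcases eq_or_ne j i₀ with h0 | h0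
        · rw [h0]
          rw [if_pos rfl, if_neg (Ne.symm hne)]
          simp [Pi.single_eq_same, Pi.single_eq_of_ne (Ne.symm hne), hi₀]
        · rcases eq_or_ne j i₁ with h1 | h1
          · rw [h1]
            rw [if_neg (fun hh => h0 (h1 ▸ hh)), if_pos rfl]
            simp [Pi.single_eq_same, Pi.single_eq_of_ne hne, hi₁]
          · rw [if_neg h0, if_neg h1]
            simp [Pi.single_eq_of_ne h0, Pi.single_eq_of_ne h1]
      rw [Finset.sum_congr rfl (fun j _ => hterm j), Finset.sum_add_distrib]
      simp [Finset.sum_ite_eq']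
      ring
    have hq'plane : ∀ s t : ℝ, q' (s • a + t • b) ≤ 0 := by
      intro s t
      refine hQle _ ?_
      rw [hcomb]
      nlinarith [sq_nonneg s, sq_nonneg t]
    have hq'a : q' a < 0 := by
      refine hQlt a ?_
      have h10 := hcomb 1 0
      rw [one_smul, zero_smul, add_zero] at h10
      rw [h10]; norm_num
    refine no_semidef_plane hq' hq'a ?_ hq'plane
    intro r hr
    have hsingle : (Pi.single i₁ 1 : Fin (n+1) → ℝ) = r • (Pi.single i₀ 1 : Fin (n+1) → ℝ) := by
      calc (Pi.single i₁ 1 : Fin (n+1) → ℝ) = G b := (G.apply_symm_apply _).symm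
        _ = G (r • a) := by rw [hr]
        _ = r • G a := by rw [_root_.map_smul]
        _ = r • (Pi.single i₀ 1 : Fin (n+1) → ℝ) := by rw [hadef, G.apply_symm_apply]
    have h1 := congrFun hsingle i₁
    rw [Pi.single_eq_same] at h1
    rw [Pi.smul_apply, Pi.single_eq_of_ne hne, smul_eq_mul, mul_zero] at h1
    exact one_ne_zero h1
  -- step (c): no zero weight
  have hnozero : ∀ i, w' i ≠ 0 := by
    intro i₂ hi₂
    set u : V := G.symm (Pi.single i₂ 1) with hudef
    have hQzu : ∀ s t : ℝ, Q (s • v + t • u) = s ^ 2 * Q v := by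
      intro s t
      have hGv : G (s • v + t • u) = s • G v + t • (Pi.single i₂ 1 : Fin (n+1) → ℝ) := by
        rw [map_add, _root_.map_smul, _root_.map_smul, hudef, G.apply_symm_apply]
      rw [hG, hGv, hG v, Finset.mul_sum]
      apply Finset.sum_congr rfl
      intro j _
      rcases eq_or_ne j i₂ with h2 | h2
      · rw [h2, hi₂]
        simp
      · simp only [Pi.add_apply, Pi.smul_apply, Pi.single_eq_of_ne h2, smul_eq_mul,
          mul_zero, add_zero]
        ring
    have hq'vu : ∀ s t : ℝ, q' (s • v + t • u) ≤ 0 := by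
      intro s t
      refine hQle _ ?_
      rw [hQzu s t]
      nlinarith [sq_nonneg s, hQv]
    refine no_semidef_plane hq' hv' ?_ hq'vu
    intro r hr
    have hQu : Q u = 0 := by
      have h01 := hQzu 0 1
      rw [zero_smul, one_smul, zero_add] at h01
      simpa using h01
    have hr0 : r = 0 := by
      have hQrv : Q (r • v) = r ^ 2 * Q v := by
        have h := hQzu r 0
        rwa [zero_smul, add_zero] at h
      rw [hr, hQrv] at hQu
      rcases mul_eq_zero.mp hQu with h | h
      · exact (pow_eq_zero_iff two_ne_zero).mp h
      · exact absurd h (ne_of_lt hQv)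
    rw [hr0, zero_smul] at hr
    have h1 : (Pi.single i₂ 1 : Fin (n+1) → ℝ) = 0 := by
      rw [← G.apply_symm_apply (Pi.single i₂ 1 : Fin (n+1) → ℝ), ← hudef, hr, map_zero]
    have h2 := congrFun h1 i₂
    rw [Pi.single_eq_same] at h2
    exact one_ne_zero h2
  have hone : ∀ i, i ≠ i₀ → w' i = 1 := by
    intro i hi
    rcases hw'3 i with h | h | h
    · exact absurd (huniq i h) hi
    · exact absurd h (hnozero i)
    · exact h
  -- the final linear equivalence
  have hwτ : ∀ j, w' j = if Equiv.swap (0 : Fin (n+1)) i₀ j = 0 then (-1 : ℝ) else 1 := by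
    intro j
    rcases eq_or_ne j i₀ with h | h
    · rw [h, Equiv.swap_apply_right, if_pos rfl, hi₀]
    · rcases eq_or_ne j 0 with h0 | h0
      · have hi00 : i₀ ≠ 0 := fun hh => h (h0.trans hh.symm)
        rw [h0, Equiv.swap_apply_left, if_neg hi00, hone 0 (Ne.symm hi00)]
      · rw [Equiv.swap_apply_of_ne_of_ne h0 h, if_neg h0, hone j h]
  refine ⟨(LinearEquiv.funCongrLeft ℝ ℝ (Equiv.swap (0 : Fin (n+1)) i₀)).trans G.symm, ?_⟩
  intro x
  have happ : ((LinearEquiv.funCongrLeft ℝ ℝ (Equiv.swap (0 : Fin (n+1)) i₀)).trans G.symm) x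
      = G.symm (x ∘ (Equiv.swap (0 : Fin (n+1)) i₀)) := rfl
  rw [happ, hG, G.apply_symm_apply]
  have hsum2 : ∀ j : Fin (n+1),
      w' j * ((x ∘ (Equiv.swap (0 : Fin (n+1)) i₀)) j) ^ 2
        = (fun k => (if k = (0 : Fin (n+1)) then (-1 : ℝ) else 1) * x k ^ 2)
            ((Equiv.swap (0 : Fin (n+1)) i₀) j) := by
    intro j
    rw [hwτ j]
    rfl
  rw [Finset.sum_congr rfl (fun j _ => hsum2 j),
    Equiv.sum_comp (Equiv.swap (0 : Fin (n+1)) i₀)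
      (fun k => (if k = (0 : Fin (n+1)) then (-1 : ℝ) else 1) * x k ^ 2)]
  rfl
end

section
/- Let q and q′ be Lorentzian quadratic forms on a real vector space V of dimension n+1 (n ≥ 1) with q ⪯ q′, and let c ∈ [0,1]. Then: (i) the quadratic form (1−c)·q♯ + c·q′♯ on the dual space V* is Lorentzian (in particular nondegenerate); (ii) there exists a unique nondegenerate quadratic form q_c on V whose dual form equals (1−c)·q♯ + c·q′♯; (iii) this q_c is Lorentzian and satisfies q ⪯ q_c ⪯ q′. (Pointwise content of Theorem 2.9(3)–(4).) -/
/-- The polar (associated symmetric bilinear) form `B` of a quadratic form `q`,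
normalized so that `B(v,v) = q(v)`. -/
noncomputable def polarForm {V : Type*} [AddCommGroup V] [Module ℝ V]
    (q : QuadraticForm ℝ V) (v w : V) : ℝ :=
  (q (v + w) - q v - q w) / 2

/-- `qc` is a nondegenerate quadratic form on `V` whose dual form (pulled back through a
musical isomorphism `sc : V* ≃ V` inverting `v ↦ B_{qc}(v,·)`) equals `Q` on `V*`. -/
noncomputable def HasDualForm {V : Type*} [AddCommGroup V] [Module ℝ V]
    (qc : QuadraticForm ℝ V) (Q : (V →ₗ[ℝ] ℝ) → ℝ) : Prop :=
  (∀ v : V, (∀ w : V, polarForm qc v w = 0) → v = 0) ∧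
    ∃ sc : (V →ₗ[ℝ] ℝ) ≃ₗ[ℝ] V,
      (∀ (ω : V →ₗ[ℝ] ℝ) (v : V), polarForm qc (sc ω) v = ω v) ∧
        ∀ ω : V →ₗ[ℝ] ℝ, ω (sc ω) = Q ω

namespace LorAux

noncomputable section

def sgn {n : ℕ} (i : Fin (n + 1)) : ℝ := if i = 0 then -1 else 1

def pmink (n : ℕ) (x y : Fin (n + 1) → ℝ) : ℝ := ∑ i, sgn i * x i * y i

lemma mink_eq {n : ℕ} (x : Fin (n + 1) → ℝ) : mink n x = ∑ i, sgn i * x i * x i := by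
  unfold mink sgn; congr 1; funext i; ring

lemma mink_split {n : ℕ} (x : Fin (n + 1) → ℝ) :
    mink n x = -(x 0 * x 0) + ∑ i : Fin n, x i.succ * x i.succ := by
  rw [mink_eq, Fin.sum_univ_succ]
  simp [sgn, Fin.succ_ne_zero]

lemma pmink_split {n : ℕ} (x y : Fin (n + 1) → ℝ) :
    pmink n x y = -(x 0 * y 0) + ∑ i : Fin n, x i.succ * y i.succ := by
  unfold pmink
  rw [Fin.sum_univ_succ]
  simp [sgn, Fin.succ_ne_zero]

lemma mink_add {n : ℕ} (x y : Fin (n + 1) → ℝ) :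
    mink n (x + y) = mink n x + mink n y + 2 * pmink n x y := by
  simp only [mink_split, pmink_split, Pi.add_apply]
  have e1 : ∀ i : Fin n, (x i.succ + y i.succ) * (x i.succ + y i.succ)
      = x i.succ * x i.succ + (y i.succ * y i.succ + 2 * (x i.succ * y i.succ)) :=
    fun i => by ring
  rw [Finset.sum_congr rfl (fun i _ => e1 i), Finset.sum_add_distrib, Finset.sum_add_distrib,
    ← Finset.mul_sum]
  ring

lemma eq_zero_of_parts {n : ℕ} (w : Fin (n + 1) → ℝ) (h0 : w 0 = 0)
    (h : ∀ i : Fin n, w i.succ = 0) : w = 0 := by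
  funext i
  refine Fin.cases ?_ ?_ i
  · exact h0
  · exact h

/-- M1 -/
lemma exists_causal_orth {n : ℕ} (v : Fin (n + 1) → ℝ) (hv : 0 ≤ mink n v) :
    ∃ w : Fin (n + 1) → ℝ, w ≠ 0 ∧ mink n w ≤ 0 ∧ pmink n v w = 0 := by
  by_cases h0 : v = 0
  · refine ⟨fun i => if i = 0 then 1 else 0, ?_, ?_, ?_⟩
    · intro h
      have := congrFun h 0
      simp at this
    · rw [mink_split]; simp [Fin.succ_ne_zero]
    · rw [pmink_split]; simp [h0]
  · set S : ℝ := ∑ i : Fin n, v i.succ * v i.succ with hS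
    have hSnn : 0 ≤ S := Finset.sum_nonneg fun i _ => mul_self_nonneg _
    have hvS : v 0 * v 0 ≤ S := by
      have := hv
      rw [mink_split] at this
      linarith
    have hSpos : 0 < S := by
      rcases lt_or_eq_of_le hSnn with h | h
      · exact h
      · exfalso
        apply h0
        have h0' : v 0 = 0 := by nlinarith
        refine eq_zero_of_parts v h0' fun i => ?_
        have hterm : ∀ i ∈ Finset.univ, 0 ≤ v (Fin.succ i) * v (Fin.succ i) :=
          fun i _ => mul_self_nonneg _
        have := (Finset.sum_eq_zero_iff_of_nonneg hterm).mp h.symm i (Finset.mem_univ i)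
        nlinarith
    refine ⟨fun i => if i = 0 then S else v 0 * v i, ?_, ?_, ?_⟩
    · intro h
      have := congrFun h 0
      simp at this
      exact absurd this (ne_of_gt hSpos)
    · rw [mink_split]
      simp only [if_pos rfl, Fin.succ_ne_zero, if_neg, reduceIte]
      have : ∑ i : Fin n, v 0 * v i.succ * (v 0 * v i.succ) = v 0 * v 0 * S := by
        rw [hS, Finset.mul_sum]; congr 1; funext i; ring
      rw [this]
      nlinarith
    · rw [pmink_split]
      simp only [if_pos rfl, Fin.succ_ne_zero, reduceIte]
      have : ∑ i : Fin n, v i.succ * (v 0 * v i.succ) = v 0 * S := by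
        rw [hS, Finset.mul_sum]; congr 1; funext i; ring
      rw [this]
      ring

/-- M2 -/
lemma eq_zero_of_orth_timelike {n : ℕ} (u w : Fin (n + 1) → ℝ) (hu : mink n u < 0)
    (hw : mink n w ≤ 0) (ho : pmink n u w = 0) : w = 0 := by
  rw [mink_split] at hu hw
  rw [pmink_split] at ho
  set U : ℝ := ∑ i : Fin n, u i.succ * u i.succ with hU
  set W : ℝ := ∑ i : Fin n, w i.succ * w i.succ with hW
  have hUnn : 0 ≤ U := Finset.sum_nonneg fun i _ => mul_self_nonneg _
  have hWnn : 0 ≤ W := Finset.sum_nonneg fun i _ => mul_self_nonneg _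
  have hcs : (∑ i : Fin n, u i.succ * w i.succ) ^ 2 ≤ U * W := by
    have := Finset.sum_mul_sq_le_sq_mul_sq Finset.univ (fun i : Fin n => u i.succ)
      (fun i => w i.succ)
    calc (∑ i : Fin n, u i.succ * w i.succ) ^ 2
        ≤ (∑ i : Fin n, u i.succ ^ 2) * ∑ i : Fin n, w i.succ ^ 2 := this
      _ = U * W := by rw [hU, hW]; congr 1 <;> · congr 1; funext i; ring
  have hzero : w 0 = 0 := by
    by_contra hne
    have h1 : ∑ i : Fin n, u i.succ * w i.succ = u 0 * w 0 := by linarith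
    have h2 : (u 0 * w 0) ^ 2 ≤ U * W := by rw [← h1]; exact hcs
    have hw0sq : 0 < w 0 * w 0 := mul_self_pos.mpr hne
    have hWle : W ≤ w 0 * w 0 := by linarith
    have h3 : U * W ≤ U * (w 0 * w 0) := mul_le_mul_of_nonneg_left hWle hUnn
    have h4 : U * (w 0 * w 0) < (u 0 * u 0) * (w 0 * w 0) :=
      mul_lt_mul_of_pos_right (by linarith) hw0sq
    have h5 : (u 0 * w 0) ^ 2 = (u 0 * u 0) * (w 0 * w 0) := by ring
    linarith
  have hWzero : W = 0 := by nlinarith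
  refine eq_zero_of_parts w hzero fun i => ?_
  have hterm : ∀ i ∈ Finset.univ, 0 ≤ w (Fin.succ i) * w (Fin.succ i) :=
    fun i _ => mul_self_nonneg _
  have := (Finset.sum_eq_zero_iff_of_nonneg hterm).mp hWzero i (Finset.mem_univ i)
  nlinarith

/-- MC -/
lemma dep_of_plane_nonpos {n : ℕ} (x y : Fin (n + 1) → ℝ)
    (h : ∀ α β : ℝ, mink n (α • x + β • y) ≤ 0) :
    ∃ α β : ℝ, ¬(α = 0 ∧ β = 0) ∧ α • x + β • y = 0 := by
  by_cases hxy : y 0 = 0 ∧ x 0 = 0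
  · -- then mink x = sum of squares ≤ 0 ⇒ x = 0
    have hx := h 1 0
    simp only [one_smul, zero_smul, add_zero] at hx
    rw [mink_split, hxy.2] at hx
    have hx0 : ∀ i : Fin n, x i.succ = 0 := by
      intro i
      have hterm : ∀ i ∈ Finset.univ, 0 ≤ x (Fin.succ i) * x (Fin.succ i) :=
        fun i _ => mul_self_nonneg _
      have hsum : ∑ i : Fin n, x i.succ * x i.succ = 0 := by
        have hnn : 0 ≤ ∑ i : Fin n, x i.succ * x i.succ :=
          Finset.sum_nonneg fun i _ => mul_self_nonneg _
        nlinarith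
      have := (Finset.sum_eq_zero_iff_of_nonneg hterm).mp hsum i (Finset.mem_univ i)
      nlinarith
    refine ⟨1, 0, by simp, ?_⟩
    have : x = 0 := eq_zero_of_parts x hxy.2 hx0
    simp [this]
  · set w : Fin (n + 1) → ℝ := y 0 • x + (-(x 0)) • y with hw
    have hw0 : w 0 = 0 := by simp [hw]; ring
    have hwm := h (y 0) (-(x 0))
    rw [← hw] at hwm
    rw [mink_split, hw0] at hwm
    have hwz : w = 0 := by
      refine eq_zero_of_parts w hw0 fun i => ?_
      have hterm : ∀ i ∈ Finset.univ, 0 ≤ w (Fin.succ i) * w (Fin.succ i) :=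
        fun i _ => mul_self_nonneg _
      have hsum : ∑ i : Fin n, w i.succ * w i.succ = 0 := by
        have hnn : 0 ≤ ∑ i : Fin n, w i.succ * w i.succ :=
          Finset.sum_nonneg fun i _ => mul_self_nonneg _
        nlinarith
      have := (Finset.sum_eq_zero_iff_of_nonneg hterm).mp hsum i (Finset.mem_univ i)
      nlinarith
    exact ⟨y 0, -(x 0), fun hc => hxy ⟨hc.1, by simpa using hc.2⟩, hwz⟩

/-- nondegeneracy of pmink -/
lemma pmink_nondeg {n : ℕ} (x : Fin (n + 1) → ℝ) (h : ∀ y, pmink n x y = 0) : x = 0 := by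
  funext i
  simp only [Pi.zero_apply]
  have h1 := h (fun j => if j = i then 1 else 0)
  unfold pmink at h1
  simp only at h1
  rw [Finset.sum_eq_single i (fun b _ hb => by simp [hb])
    (fun hi => absurd (Finset.mem_univ i) hi)] at h1
  simp only [eq_self_iff_true, if_true, mul_one] at h1
  have hs : sgn (n := n) i ≠ 0 := by unfold sgn; split <;> norm_num
  rcases mul_eq_zero.mp h1 with h' | h'
  · exact absurd h' hs
  · exact h' 


section Abstract

variable {n : ℕ} {V : Type*} [AddCommGroup V] [Module ℝ V]

lemma polarForm_eq (q : QuadraticForm ℝ V) (v w : V) :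
    polarForm q v w = QuadraticMap.polar ⇑q v w / 2 := rfl

lemma polarForm_comm (q : QuadraticForm ℝ V) (v w : V) :
    polarForm q v w = polarForm q w v := by
  unfold polarForm; rw [add_comm]; ring

lemma polarForm_self (q : QuadraticForm ℝ V) (x : V) : polarForm q x x = q x := by
  unfold polarForm
  have h1 : x + x = (2 : ℝ) • x := by rw [two_smul]
  rw [h1, QuadraticMap.map_smul]
  simp only [smul_eq_mul]
  ring

lemma q_add_smul (q : QuadraticForm ℝ V) (a b : V) (t : ℝ) :
    q (a + t • b) = q a + 2 * t * polarForm q a b + t ^ 2 * q b := by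
  have h1 : q (a + t • b) = q a + q (t • b) + QuadraticMap.polar ⇑q a (t • b) := by
    unfold QuadraticMap.polar; ring
  rw [QuadraticMap.polar_smul_right, QuadraticMap.map_smul] at h1
  rw [polarForm_eq, h1]
  simp only [smul_eq_mul]
  ring

lemma polarForm_transport (q : QuadraticForm ℝ V) (e : (Fin (n + 1) → ℝ) ≃ₗ[ℝ] V)
    (he : ∀ x, q (e x) = mink n x) (x y : Fin (n + 1) → ℝ) :
    polarForm q (e x) (e y) = pmink n x y := by
  unfold polarForm
  rw [← map_add, he, he, he, mink_add]
  ring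

lemma exists_timelike (q : QuadraticForm ℝ V) (hL : IsLorentzian n ⇑q) :
    ∃ v, q v < 0 := by
  obtain ⟨e, he⟩ := hL
  refine ⟨e (fun j => if j = 0 then 1 else 0), ?_⟩
  rw [he, mink_split]
  simp [Fin.succ_ne_zero]

/-- A1 -/
lemma eq_zero_of_polar_orth (q : QuadraticForm ℝ V) (hL : IsLorentzian n ⇑q) {u w : V}
    (hu : q u < 0) (hw : q w ≤ 0) (ho : polarForm q u w = 0) : w = 0 := by
  obtain ⟨e, he⟩ := hL
  have hu' : q (e (e.symm u)) < 0 := by rwa [e.apply_symm_apply]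
  have hw' : q (e (e.symm w)) ≤ 0 := by rwa [e.apply_symm_apply]
  have ho' : polarForm q (e (e.symm u)) (e (e.symm w)) = 0 := by
    rwa [e.apply_symm_apply, e.apply_symm_apply]
  rw [he] at hu' hw'
  rw [polarForm_transport q e he] at ho'
  have := eq_zero_of_orth_timelike _ _ hu' hw' ho'
  have h2 : w = e (e.symm w) := (e.apply_symm_apply w).symm
  rw [h2, this, map_zero]

/-- A2 -/
lemma exists_causal_polar_orth (q : QuadraticForm ℝ V) (hL : IsLorentzian n ⇑q) {v : V}
    (hv : 0 ≤ q v) : ∃ w, w ≠ 0 ∧ q w ≤ 0 ∧ polarForm q v w = 0 := by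
  obtain ⟨e, he⟩ := hL
  have hv' : 0 ≤ mink n (e.symm v) := by rw [← he, e.apply_symm_apply]; exact hv
  obtain ⟨y, hy0, hym, hyp⟩ := exists_causal_orth _ hv'
  refine ⟨e y, ?_, by rwa [he], ?_⟩
  · intro h; exact hy0 (by rwa [LinearEquiv.map_eq_zero_iff] at h)
  · have : polarForm q (e (e.symm v)) (e y) = pmink n (e.symm v) y :=
      polarForm_transport q e he _ _
    rwa [e.apply_symm_apply, hyp] at this

/-- AC -/
lemma dep_of_plane_nonpos' (q : QuadraticForm ℝ V) (hL : IsLorentzian n ⇑q) (a b : V)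
    (h : ∀ α β : ℝ, q (α • a + β • b) ≤ 0) :
    ∃ α β : ℝ, ¬(α = 0 ∧ β = 0) ∧ α • a + β • b = 0 := by
  obtain ⟨e, he⟩ := hL
  have key : ∀ α β : ℝ, mink n (α • e.symm a + β • e.symm b) ≤ 0 := by
    intro α β
    have : e (α • e.symm a + β • e.symm b) = α • a + β • b := by
      rw [map_add, map_smul, map_smul, e.apply_symm_apply, e.apply_symm_apply]
    rw [← he, this]
    exact h α β
  obtain ⟨α, β, hαβ, hz⟩ := dep_of_plane_nonpos _ _ key
  refine ⟨α, β, hαβ, ?_⟩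
  have : e (α • e.symm a + β • e.symm b) = α • a + β • b := by
    rw [map_add, map_smul, map_smul, e.apply_symm_apply, e.apply_symm_apply]
  rw [← this, hz, map_zero]

/-- nondegeneracy -/
lemma lorentzian_nondeg (q : QuadraticForm ℝ V) (hL : IsLorentzian n ⇑q) {v : V}
    (h : ∀ w, polarForm q v w = 0) : v = 0 := by
  obtain ⟨e, he⟩ := hL
  have : ∀ y, pmink n (e.symm v) y = 0 := by
    intro y
    rw [← polarForm_transport q e he, e.apply_symm_apply]
    exact h (e y)
  have h0 := pmink_nondeg _ this
  have h2 : v = e (e.symm v) := (e.apply_symm_apply v).symm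
  rw [h2, h0, map_zero]

/-- T2: closed cone containment -/
lemma nonpos_mono (q₁ q₂ : QuadraticForm ℝ V) (hL : IsLorentzian n ⇑q₁)
    (hle : {v : V | q₁ v < 0} ⊆ {v : V | q₂ v < 0}) {w : V} (h : q₁ w ≤ 0) :
    q₂ w ≤ 0 := by
  rcases lt_or_eq_of_le h with h' | h'
  · exact le_of_lt (hle h')
  by_cases hw0 : w = 0
  · rw [hw0, QuadraticMap.map_zero]
  obtain ⟨v₀, hv₀⟩ := exists_timelike q₁ hL
  set B : ℝ := polarForm q₁ w v₀ with hB
  have hB0 : B ≠ 0 := by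
    intro hz
    exact hw0 (eq_zero_of_polar_orth q₁ hL hv₀ h (by rw [polarForm_comm]; exact hz))
  have hneg : ∀ ε : ℝ, 0 < ε → q₂ (w + (-(ε * B)) • v₀) < 0 := by
    intro ε hε
    apply hle
    show q₁ (w + (-(ε * B)) • v₀) < 0
    rw [q_add_smul, h', ← hB]
    have hBB : 0 < B * B := mul_self_pos.mpr hB0
    have : (0:ℝ) + 2 * (-(ε * B)) * B + (-(ε * B)) ^ 2 * q₁ v₀
        = ε * (B * B) * (ε * q₁ v₀ - 2) := by ring
    rw [this]
    have : ε * q₁ v₀ - 2 < 0 := by nlinarith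
    nlinarith
  by_contra hpos
  push_neg at hpos
  set C₁ : ℝ := 2 * polarForm q₂ w v₀ with hC₁
  set C₂ : ℝ := q₂ v₀ with hC₂
  have hexp : ∀ ε : ℝ, q₂ (w + (-(ε * B)) • v₀)
      = q₂ w + (-(ε * B)) * C₁ + (ε * B) ^ 2 * C₂ := by
    intro ε
    rw [q_add_smul]
    ring
  set M : ℝ := |B| * |C₁| + (B * B) * |C₂| with hM
  have hMnn : 0 ≤ M := by
    rw [hM]
    exact add_nonneg (mul_nonneg (abs_nonneg _) (abs_nonneg _))
      (mul_nonneg (mul_self_nonneg _) (abs_nonneg _))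
  have hM1 : (0:ℝ) < M + 1 := by linarith
  set ε : ℝ := min 1 (q₂ w / (M + 1)) with hε
  have hεpos : 0 < ε := lt_min one_pos (div_pos hpos hM1)
  have hεle1 : ε ≤ 1 := min_le_left _ _
  have hεle : ε ≤ q₂ w / (M + 1) := min_le_right _ _
  have hcontr := hneg ε hεpos
  rw [hexp] at hcontr
  have e1 : -(ε * (|B| * |C₁|)) ≤ (-(ε * B)) * C₁ := by
    have h1 : B * C₁ ≤ |B| * |C₁| := by
      calc B * C₁ ≤ |B * C₁| := le_abs_self _
        _ = |B| * |C₁| := abs_mul _ _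
    nlinarith [mul_le_mul_of_nonneg_left h1 (le_of_lt hεpos)]
  have e2 : -(ε * ((B * B) * |C₂|)) ≤ (ε * B) ^ 2 * C₂ := by
    have h1 : -|C₂| ≤ C₂ := neg_abs_le _
    have h2 : (ε * B) ^ 2 * C₂ ≥ -((ε * B) ^ 2 * |C₂|) := by nlinarith [sq_nonneg (ε * B)]
    have h3 : (ε * B) ^ 2 * |C₂| ≤ ε * ((B * B) * |C₂|) := by
      have h4 : ε ^ 2 ≤ ε := by nlinarith
      have h5 : (0:ℝ) ≤ (B * B) * |C₂| := mul_nonneg (mul_self_nonneg _) (abs_nonneg _)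
      nlinarith
    linarith
  have h1 : ε * (M + 1) ≤ q₂ w := (le_div_iff₀ hM1).mp hεle
  have h2 : ε * M < q₂ w := by nlinarith
  have : q₂ w - ε * M ≤ q₂ w + (-(ε * B)) * C₁ + (ε * B) ^ 2 * C₂ := by
    have : -(ε * M) ≤ (-(ε * B)) * C₁ + (ε * B) ^ 2 * C₂ := by rw [hM]; linarith
    linarith
  linarith

/-- DR' : dual reversal -/
lemma dual_reversal (q₁ q₂ : QuadraticForm ℝ V) (hL₁ : IsLorentzian n ⇑q₁)
    (hL₂ : IsLorentzian n ⇑q₂)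
    (hle : {v : V | q₁ v < 0} ⊆ {v : V | q₂ v < 0}) {u v : V} (hu : q₂ u < 0)
    (hB : ∀ x, polarForm q₁ v x = polarForm q₂ u x) : q₁ v < 0 := by
  by_contra hge
  push_neg at hge
  obtain ⟨w, hw0, hwn, hwo⟩ := exists_causal_polar_orth q₁ hL₁ hge
  have hw2 : q₂ w ≤ 0 := nonpos_mono q₁ q₂ hL₁ hle hwn
  have hzo : polarForm q₂ u w = 0 := by rw [← hB]; exact hwo
  exact hw0 (eq_zero_of_polar_orth q₂ hL₂ hu hw2 hzo)

/-- D: signature recognition -/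
lemma isLorentzian_of_quadratic {W : Type*} [AddCommGroup W] [Module ℝ W]
    (e0 : (Fin (n + 1) → ℝ) ≃ₗ[ℝ] W) (Q : QuadraticForm ℝ W)
    (h1 : ∃ v, Q v < 0)
    (h2 : ∀ a b : W, (∀ α β : ℝ, Q (α • a + β • b) ≤ 0) →
      ∃ α β : ℝ, ¬(α = 0 ∧ β = 0) ∧ α • a + β • b = 0) :
    IsLorentzian n ⇑Q := by
  haveI : FiniteDimensional ℝ W := Module.Finite.equiv e0
  obtain ⟨w, hw, hEq⟩ := Q.equivalent_one_zero_neg_one_weighted_sum_squared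
  obtain ⟨φ⟩ := hEq
  set ψ := φ.toLinearEquiv with hψ
  have hψφ : ∀ x : W, ψ x = φ x := fun x => congrFun (φ.coe_toLinearEquiv) x
  have key : ∀ x : W, Q x = QuadraticMap.weightedSumSquares ℝ w (ψ x) := by
    intro x
    rw [hψφ]
    exact (φ.map_app x).symm
  have hm : Module.finrank ℝ W = n + 1 := by
    rw [← e0.finrank_eq]
    simp [Module.finrank_fintype_fun_eq_card]
  have hneg : ∃ i, w i = -1 := by
    by_contra hno
    push_neg at hno
    obtain ⟨v, hv⟩ := h1
    have h4 : 0 ≤ QuadraticMap.weightedSumSquares ℝ w (ψ v) := by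
      rw [QuadraticMap.weightedSumSquares_apply]
      apply Finset.sum_nonneg
      intro i _
      rcases hw i with h | h | h
      · exact absurd h (hno i)
      · rw [h]; simp
      · rw [h]; simpa using mul_self_nonneg _
    rw [← key v] at h4
    linarith
  obtain ⟨i0, hi0⟩ := hneg
  have hone : ∀ j, j ≠ i0 → w j = 1 := by
    intro j hj
    by_contra hj1
    have hjle : w j ≤ 0 := by
      rcases hw j with h | h | h
      · rw [h]; norm_num
      · rw [h]
      · exact absurd h hj1
    set sa : Fin (Module.finrank ℝ W) → ℝ := Pi.single i0 1 with hsa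
    set sb : Fin (Module.finrank ℝ W) → ℝ := Pi.single j 1 with hsb
    set a := ψ.symm sa with ha
    set b := ψ.symm sb with hb
    have hji0 : i0 ≠ j := fun hc => hj hc.symm
    have hcomb : ∀ α β : ℝ, ψ (α • a + β • b) = α • sa + β • sb := by
      intro α β
      rw [map_add, map_smul, map_smul, ha, hb, ψ.apply_symm_apply, ψ.apply_symm_apply]
    have hnp : ∀ α β : ℝ, Q (α • a + β • b) ≤ 0 := by
      intro α β
      rw [key, hcomb, QuadraticMap.weightedSumSquares_apply]
      apply Finset.sum_nonpos
      intro i _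
      by_cases hii : i = i0
      · subst hii
        have hval : (α • sa + β • sb) i = α := by
          rw [hsa, hsb]
          simp [Pi.single_eq_same, Pi.single_eq_of_ne hji0]
        rw [hval, hi0]
        simpa using neg_nonpos.mpr (mul_self_nonneg α)
      · by_cases hij : i = j
        · subst hij
          have hval : (α • sa + β • sb) i = β := by
            rw [hsa, hsb]
            simp [Pi.single_eq_same, Pi.single_eq_of_ne hii]
          rw [hval]
          have hh := mul_nonneg (neg_nonneg.mpr hjle) (mul_self_nonneg β)
          simp only [smul_eq_mul]
          nlinarith
        · have hval : (α • sa + β • sb) i = 0 := by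
            rw [hsa, hsb]
            simp [Pi.single_eq_of_ne hii, Pi.single_eq_of_ne hij]
          rw [hval]
          simp
    obtain ⟨α, β, hαβ, hz⟩ := h2 a b hnp
    have hzero : α • sa + β • sb = 0 := by
      rw [← hcomb, hz, map_zero]
    have hα : α = 0 := by
      have hcf := congrFun hzero i0
      rw [hsa, hsb] at hcf
      simpa [Pi.single_eq_same, Pi.single_eq_of_ne hji0] using hcf
    have hβ : β = 0 := by
      have hcf := congrFun hzero j
      rw [hsa, hsb] at hcf
      simpa [Pi.single_eq_same, Pi.single_eq_of_ne hj] using hcf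
    exact hαβ ⟨hα, hβ⟩
  set j0 : Fin (n + 1) := Fin.cast hm i0 with hj0
  set τ : Fin (n + 1) ≃ Fin (Module.finrank ℝ W) :=
    (Equiv.swap (0 : Fin (n + 1)) j0).trans (finCongr hm.symm) with hτ
  have hcast : Fin.cast hm.symm j0 = i0 := rfl
  have hwτ : ∀ i : Fin (n + 1), w (τ i) = (if i = 0 then (-1 : ℝ) else 1) := by
    intro i
    by_cases hi : i = 0
    · subst hi
      rw [if_pos rfl, hτ]
      simp only [Equiv.trans_apply, Equiv.swap_apply_left, finCongr_apply, hcast]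
      exact hi0
    · rw [if_neg hi, hτ]
      simp only [Equiv.trans_apply, finCongr_apply]
      apply hone
      intro hc
      apply hi
      have h5 : Equiv.swap (0 : Fin (n+1)) j0 i = j0 := by
        have : Fin.cast hm.symm (Equiv.swap (0 : Fin (n+1)) j0 i) = Fin.cast hm.symm j0 := by
          rw [hc, hcast]
        have hv : (Fin.cast hm.symm ((Equiv.swap (0 : Fin (n+1)) j0) i)).val
            = (Fin.cast hm.symm j0).val := congrArg Fin.val this
        exact Fin.ext hv
      have h6 : Equiv.swap (0 : Fin (n+1)) j0 0 = j0 := Equiv.swap_apply_left _ _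
      have := (Equiv.swap (0 : Fin (n+1)) j0).injective (h5.trans h6.symm)
      exact this
  refine ⟨(LinearEquiv.funCongrLeft ℝ ℝ τ.symm).trans ψ.symm, fun x => ?_⟩
  rw [LinearEquiv.trans_apply, key, ψ.apply_symm_apply,
    QuadraticMap.weightedSumSquares_apply]
  rw [← Equiv.sum_comp τ (fun j => w j • ((LinearEquiv.funCongrLeft ℝ ℝ τ.symm x) j *
    (LinearEquiv.funCongrLeft ℝ ℝ τ.symm x) j))]
  unfold mink
  apply Finset.sum_congr rfl
  intro i _
  rw [LinearEquiv.funCongrLeft_apply, LinearMap.funLeft_apply, Equiv.symm_apply_apply, hwτ i,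
    smul_eq_mul]
  ring

lemma polarForm_comp {W : Type*} [AddCommGroup W] [Module ℝ W]
    (q : QuadraticForm ℝ V) (f : W →ₗ[ℝ] V) (x y : W) :
    polarForm (q.comp f) x y = polarForm q (f x) (f y) := by
  unfold polarForm
  rw [QuadraticMap.comp_apply, QuadraticMap.comp_apply, QuadraticMap.comp_apply, map_add]

lemma dual_sep (e : (Fin (n + 1) → ℝ) ≃ₗ[ℝ] V) (x : V)
    (h : ∀ ψ : V →ₗ[ℝ] ℝ, ψ x = 0) : x = 0 := by
  have h0 : e.symm x = 0 := by
    funext i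
    have := h ((LinearMap.proj i).comp (e.symm : V ≃ₗ[ℝ] (Fin (n+1) → ℝ)).toLinearMap)
    simpa using this
  have := congrArg e h0
  rwa [e.apply_symm_apply, map_zero] at this

/-- uniqueness of the primal form with a given dual -/
lemma hasDual_unique (e : (Fin (n + 1) → ℝ) ≃ₗ[ℝ] V) (F : (V →ₗ[ℝ] ℝ) → ℝ)
    (qc₁ qc₂ : QuadraticForm ℝ V)
    (sc₁ sc₂ : (V →ₗ[ℝ] ℝ) ≃ₗ[ℝ] V)
    (h₁₁ : ∀ (ω : V →ₗ[ℝ] ℝ) (v : V), polarForm qc₁ (sc₁ ω) v = ω v)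
    (h₁₂ : ∀ ω : V →ₗ[ℝ] ℝ, ω (sc₁ ω) = F ω)
    (h₂₁ : ∀ (ω : V →ₗ[ℝ] ℝ) (v : V), polarForm qc₂ (sc₂ ω) v = ω v)
    (h₂₂ : ∀ ω : V →ₗ[ℝ] ℝ, ω (sc₂ ω) = F ω) : qc₁ = qc₂ := by
  have sym : ∀ (qc : QuadraticForm ℝ V) (sc : (V →ₗ[ℝ] ℝ) ≃ₗ[ℝ] V),
      (∀ (ω : V →ₗ[ℝ] ℝ) (v : V), polarForm qc (sc ω) v = ω v) →
      ∀ ω ψ : V →ₗ[ℝ] ℝ, ψ (sc ω) = ω (sc ψ) := by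
    intro qc sc hsc ω ψ
    have h1 : polarForm qc (sc ω) (sc ψ) = ω (sc ψ) := hsc ω (sc ψ)
    have h2 : polarForm qc (sc ψ) (sc ω) = ψ (sc ω) := hsc ψ (sc ω)
    rw [polarForm_comm] at h1
    rw [h1] at h2
    exact h2.symm
  have key : ∀ (sc : (V →ₗ[ℝ] ℝ) ≃ₗ[ℝ] V),
      (∀ ω ψ : V →ₗ[ℝ] ℝ, ψ (sc ω) = ω (sc ψ)) →
      (∀ ω : V →ₗ[ℝ] ℝ, ω (sc ω) = F ω) →
      ∀ ω ψ : V →ₗ[ℝ] ℝ, ψ (sc ω) = (F (ω + ψ) - F ω - F ψ) / 2 := by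
    intro sc hsym hval ω ψ
    have h1 : F (ω + ψ) = F ω + F ψ + 2 * ψ (sc ω) := by
      rw [← hval, ← hval, ← hval, map_add]
      simp only [LinearMap.add_apply, map_add]
      rw [hsym ω ψ]
      ring
    linarith
  have heq : ∀ ω : V →ₗ[ℝ] ℝ, sc₁ ω = sc₂ ω := by
    intro ω
    have h3 : ∀ ψ : V →ₗ[ℝ] ℝ, ψ (sc₁ ω - sc₂ ω) = 0 := by
      intro ψ
      rw [map_sub, key sc₁ (sym qc₁ sc₁ h₁₁) h₁₂ ω ψ, key sc₂ (sym qc₂ sc₂ h₂₁) h₂₂ ω ψ]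
      ring
    have := dual_sep e _ h3
    exact sub_eq_zero.mp this
  ext x
  have hω : sc₁ (sc₁.symm x) = x := sc₁.apply_symm_apply x
  have h1 : qc₁ (sc₁ (sc₁.symm x)) = F (sc₁.symm x) := by
    rw [← polarForm_self qc₁, h₁₁, h₁₂]
  have hx2 : sc₂ (sc₁.symm x) = x := by rw [← heq, hω]
  have h2 : qc₂ (sc₂ (sc₁.symm x)) = F (sc₁.symm x) := by
    rw [← polarForm_self qc₂, h₂₁, h₂₂]
  rw [hω] at h1
  rw [hx2] at h2
  rw [h1, h2]

end Abstract
end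
end LorAux

open LorAux in
set_option maxHeartbeats 1000000 in
/-- Pointwise content of Theorem 2.9(3)–(4): if `q ⪯ q′` are Lorentzian quadratic forms
and `c ∈ [0,1]`, then (i) the convex combination `(1−c)·q♯ + c·q′♯` of the dual forms is
Lorentzian on `V*`; (ii) there is a unique nondegenerate quadratic form `q_c` on `V` whose
dual form equals `(1−c)·q♯ + c·q′♯`; (iii) this `q_c` is Lorentzian and `q ⪯ q_c ⪯ q′`. -/
theorem dual_convexCombination_lorentzian {n : ℕ} (hn : 1 ≤ n)
    {V : Type*} [AddCommGroup V] [Module ℝ V]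
    (q q' : QuadraticForm ℝ V)
    (hq : IsLorentzian n ⇑q) (hq' : IsLorentzian n ⇑q')
    (hle : {v : V | q v < 0} ⊆ {v : V | q' v < 0})
    (sharp sharp' : (V →ₗ[ℝ] ℝ) ≃ₗ[ℝ] V)
    (hsharp : ∀ (ω : V →ₗ[ℝ] ℝ) (v : V), polarForm q (sharp ω) v = ω v)
    (hsharp' : ∀ (ω : V →ₗ[ℝ] ℝ) (v : V), polarForm q' (sharp' ω) v = ω v)
    (c : ℝ) (hc : c ∈ Set.Icc (0 : ℝ) 1) :
    IsLorentzian n (fun ω : V →ₗ[ℝ] ℝ => (1 - c) * ω (sharp ω) + c * ω (sharp' ω)) ∧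
    (∃! qc : QuadraticForm ℝ V,
        HasDualForm qc (fun ω : V →ₗ[ℝ] ℝ => (1 - c) * ω (sharp ω) + c * ω (sharp' ω))) ∧
    (∀ qc : QuadraticForm ℝ V,
        HasDualForm qc (fun ω : V →ₗ[ℝ] ℝ => (1 - c) * ω (sharp ω) + c * ω (sharp' ω)) →
          IsLorentzian n ⇑qc ∧ {v : V | q v < 0} ⊆ {v : V | qc v < 0} ∧
            {v : V | qc v < 0} ⊆ {v : V | q' v < 0}) := by
  classical
  obtain ⟨hc0, hc1⟩ := hc
  obtain ⟨e, he⟩ := id hq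
  obtain ⟨g, hgdef⟩ : ∃ g : QuadraticForm ℝ (V →ₗ[ℝ] ℝ), g = q.comp sharp.toLinearMap :=
    ⟨_, rfl⟩
  obtain ⟨g', hg'def⟩ : ∃ g' : QuadraticForm ℝ (V →ₗ[ℝ] ℝ), g' = q'.comp sharp'.toLinearMap :=
    ⟨_, rfl⟩
  obtain ⟨Qf, hQfdef⟩ : ∃ Qf : QuadraticForm ℝ (V →ₗ[ℝ] ℝ), Qf = (1 - c) • g + c • g' :=
    ⟨_, rfl⟩
  have hgapp : ∀ ω, g ω = q (sharp ω) := fun ω => by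
    rw [hgdef]; exact QuadraticMap.comp_apply _ _ _
  have hg'app : ∀ ω, g' ω = q' (sharp' ω) := fun ω => by
    rw [hg'def]; exact QuadraticMap.comp_apply _ _ _
  have hQfg : ∀ ω, Qf ω = (1 - c) * g ω + c * g' ω := by
    intro ω
    rw [hQfdef]
    simp [QuadraticMap.add_apply, QuadraticMap.smul_apply, smul_eq_mul]
  have hωsharp : ∀ ω : V →ₗ[ℝ] ℝ, ω (sharp ω) = q (sharp ω) := by
    intro ω; rw [← hsharp ω (sharp ω), polarForm_self]
  have hωsharp' : ∀ ω : V →ₗ[ℝ] ℝ, ω (sharp' ω) = q' (sharp' ω) := by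
    intro ω; rw [← hsharp' ω (sharp' ω), polarForm_self]
  have hfun : ∀ ω : V →ₗ[ℝ] ℝ, (1 - c) * ω (sharp ω) + c * ω (sharp' ω) = Qf ω := by
    intro ω
    rw [hωsharp, hωsharp', hQfg, hgapp, hg'app]
  have hLg : IsLorentzian n ⇑g := by
    refine ⟨e.trans sharp.symm, fun x => ?_⟩
    rw [LinearEquiv.trans_apply, hgapp, sharp.apply_symm_apply]
    exact he x
  have hLg' : IsLorentzian n ⇑g' := by
    obtain ⟨e', he'⟩ := id hq'
    refine ⟨e'.trans sharp'.symm, fun x => ?_⟩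
    rw [LinearEquiv.trans_apply, hg'app, sharp'.apply_symm_apply]
    exact he' x
  have hDR : {ω : V →ₗ[ℝ] ℝ | g' ω < 0} ⊆ {ω : V →ₗ[ℝ] ℝ | g ω < 0} := by
    intro ω hω
    show g ω < 0
    rw [hgapp]
    refine dual_reversal q q' hq hq' hle (u := sharp' ω) ?_ ?_
    · rw [← hg'app]; exact hω
    · intro x; rw [hsharp, hsharp']
  have hQlt : ∀ ω, Qf ω < 0 → g ω < 0 := by
    intro ω h
    by_contra hg0
    push_neg at hg0
    have hg'0 : 0 ≤ g' ω := by
      by_contra h2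
      push_neg at h2
      exact absurd (hDR h2) (not_lt.mpr hg0)
    rw [hQfg ω] at h
    nlinarith [mul_nonneg (sub_nonneg.mpr hc1) hg0, mul_nonneg hc0 hg'0]
  have hQle : ∀ ω, Qf ω ≤ 0 → g ω ≤ 0 := by
    intro ω h
    by_contra hg0
    push_neg at hg0
    have hg'0 : 0 < g' ω := by
      by_contra h2
      push_neg at h2
      exact absurd (nonpos_mono g' g hLg' hDR h2) (not_le.mpr hg0)
    have hmin : 0 < min (g ω) (g' ω) := lt_min hg0 hg'0
    have h1 : (1 - c) * min (g ω) (g' ω) ≤ (1 - c) * g ω :=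
      mul_le_mul_of_nonneg_left (min_le_left _ _) (by linarith)
    have h2 : c * min (g ω) (g' ω) ≤ c * g' ω :=
      mul_le_mul_of_nonneg_left (min_le_right _ _) hc0
    rw [hQfg ω] at h
    nlinarith
  have hg'Qf : ∀ ω, g' ω < 0 → Qf ω < 0 := by
    intro ω h
    have hgω : g ω < 0 := hDR h
    have hm : max (g ω) (g' ω) < 0 := max_lt hgω h
    have h1 : (1 - c) * g ω ≤ (1 - c) * max (g ω) (g' ω) :=
      mul_le_mul_of_nonneg_left (le_max_left _ _) (by linarith)
    have h2 : c * g' ω ≤ c * max (g ω) (g' ω) :=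
      mul_le_mul_of_nonneg_left (le_max_right _ _) hc0
    rw [hQfg ω]
    nlinarith
  have hQfL : IsLorentzian n ⇑Qf := by
    apply isLorentzian_of_quadratic (e.trans sharp.symm) Qf
    · obtain ⟨ω₀, hω₀⟩ := exists_timelike g' hLg'
      exact ⟨ω₀, hg'Qf ω₀ hω₀⟩
    · intro a b hab
      exact dep_of_plane_nonpos' g hLg a b (fun α β => hQle _ (hab α β))
  have hpart1 :
      IsLorentzian n (fun ω : V →ₗ[ℝ] ℝ => (1 - c) * ω (sharp ω) + c * ω (sharp' ω)) := by
    obtain ⟨E, hE⟩ := hQfL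
    refine ⟨E, fun x => ?_⟩
    show (1 - c) * (E x) (sharp (E x)) + c * (E x) (sharp' (E x)) = mink n x
    rw [hfun, hE]
  -- construction of the canonical primal form
  haveI : FiniteDimensional ℝ V := Module.Finite.equiv e
  obtain ⟨Bmap, hBmapdef⟩ : ∃ Bmap : (V →ₗ[ℝ] ℝ) →ₗ[ℝ] ((V →ₗ[ℝ] ℝ) →ₗ[ℝ] ℝ),
      Bmap = (2 : ℝ)⁻¹ • QuadraticMap.polarBilin Qf := ⟨_, rfl⟩
  have hBapp : ∀ ω ψ, Bmap ω ψ = polarForm Qf ω ψ := by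
    intro ω ψ
    rw [hBmapdef]
    simp only [LinearMap.smul_apply, QuadraticMap.polarBilin_apply_apply, smul_eq_mul]
    rw [polarForm_eq]
    ring
  obtain ⟨S, hSdef⟩ : ∃ S : (V →ₗ[ℝ] ℝ) →ₗ[ℝ] V,
      S = (Module.evalEquiv ℝ V).symm.toLinearMap ∘ₗ Bmap := ⟨_, rfl⟩
  have hSapp : ∀ (ω ψ : V →ₗ[ℝ] ℝ), ψ (S ω) = polarForm Qf ω ψ := by
    intro ω ψ
    rw [hSdef]
    simp only [LinearMap.coe_comp, Function.comp_apply, LinearEquiv.coe_coe]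
    rw [Module.apply_evalEquiv_symm_apply]
    exact hBapp ω ψ
  have hSinj : Function.Injective S := by
    intro ω₁ ω₂ hS12
    rw [← sub_eq_zero]
    apply lorentzian_nondeg Qf hQfL
    intro ψ
    have h1 := hSapp (ω₁ - ω₂) ψ
    rw [map_sub, hS12, sub_self, map_zero] at h1
    exact h1.symm
  have hrank : Module.finrank ℝ (V →ₗ[ℝ] ℝ) = Module.finrank ℝ V := Subspace.dual_finrank_eq
  obtain ⟨sc₀, hsc₀def⟩ : ∃ sc₀ : (V →ₗ[ℝ] ℝ) ≃ₗ[ℝ] V,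
      sc₀ = S.linearEquivOfInjective hSinj hrank := ⟨_, rfl⟩
  have hsc₀ : ∀ (ω ψ : V →ₗ[ℝ] ℝ), ψ (sc₀ ω) = polarForm Qf ω ψ := by
    intro ω ψ
    rw [hsc₀def, S.linearEquivOfInjective_apply]
    exact hSapp ω ψ
  obtain ⟨qc₀, hqc₀def⟩ : ∃ qc₀ : QuadraticForm ℝ V,
      qc₀ = Qf.comp (sc₀.symm : V ≃ₗ[ℝ] (V →ₗ[ℝ] ℝ)).toLinearMap := ⟨_, rfl⟩
  have hqc₀polar : ∀ v w : V, polarForm qc₀ v w = polarForm Qf (sc₀.symm v) (sc₀.symm w) := by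
    intro v w
    rw [hqc₀def]
    exact polarForm_comp Qf _ v w
  have hqc₀nd : ∀ v : V, (∀ w, polarForm qc₀ v w = 0) → v = 0 := by
    intro v hv
    have h0 : sc₀.symm v = 0 := by
      apply lorentzian_nondeg Qf hQfL
      intro ψ
      have h1 := hv (sc₀ ψ)
      rwa [hqc₀polar, sc₀.symm_apply_apply] at h1
    have := congrArg sc₀ h0
    rwa [sc₀.apply_symm_apply, map_zero] at this
  have hqc₀sc1 : ∀ (ω : V →ₗ[ℝ] ℝ) (v : V), polarForm qc₀ (sc₀ ω) v = ω v := by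
    intro ω v
    rw [hqc₀polar, sc₀.symm_apply_apply, polarForm_comm, ← hsc₀ (sc₀.symm v) ω,
      sc₀.apply_symm_apply]
  have hqc₀sc2 : ∀ ω : V →ₗ[ℝ] ℝ,
      ω (sc₀ ω) = (1 - c) * ω (sharp ω) + c * ω (sharp' ω) := by
    intro ω
    rw [hsc₀ ω ω, polarForm_self, ← hfun]
  have hHD₀ : HasDualForm qc₀
      (fun ω : V →ₗ[ℝ] ℝ => (1 - c) * ω (sharp ω) + c * ω (sharp' ω)) :=
    ⟨hqc₀nd, sc₀, hqc₀sc1, hqc₀sc2⟩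
  refine ⟨hpart1, ⟨qc₀, hHD₀, ?_⟩, ?_⟩
  · intro qc' h'
    obtain ⟨_, sc', hsc'1, hsc'2⟩ := h'
    exact hasDual_unique e _ qc' qc₀ sc' sc₀ hsc'1 hsc'2 hqc₀sc1 hqc₀sc2
  · intro qc hqc
    obtain ⟨hnd, sc, hsc1, hsc2⟩ := hqc
    have hqcval : ∀ ω, qc (sc ω) = Qf ω := by
      intro ω
      rw [← polarForm_self qc (sc ω), hsc1, hsc2]
      exact hfun ω
    have hqx : ∀ x : V, qc x = Qf (sc.symm x) := by
      intro x
      have h1 := hqcval (sc.symm x)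
      rwa [sc.apply_symm_apply] at h1
    have hpolarQf : ∀ (ω ψ : V →ₗ[ℝ] ℝ), polarForm Qf ω ψ = ψ (sc ω) := by
      intro ω ψ
      have h1 : polarForm Qf ω ψ = polarForm qc (sc ω) (sc ψ) := by
        unfold polarForm
        rw [← hqcval, ← hqcval, ← hqcval, map_add]
      rw [h1, polarForm_comm, hsc1]
    refine ⟨?_, ?_, ?_⟩
    · obtain ⟨EQ, hEQ⟩ := hQfL
      refine ⟨EQ.trans sc, fun x => ?_⟩
      rw [LinearEquiv.trans_apply]
      show qc (sc (EQ x)) = mink n x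
      rw [hqcval, hEQ]
    · intro x hx
      show qc x < 0
      rw [hqx]
      refine dual_reversal Qf g hQfL hLg (fun ω h => hQlt ω h) (u := sharp.symm x) ?_ ?_
      · show g (sharp.symm x) < 0
        rw [hgapp, sharp.apply_symm_apply]
        exact hx
      · intro ψ
        rw [hpolarQf, sc.apply_symm_apply, hgdef, polarForm_comp]
        simp only [LinearEquiv.coe_coe, LinearEquiv.apply_symm_apply]
        rw [polarForm_comm, hsharp]
    · intro x hx
      have hQfx : Qf (sc.symm x) < 0 := by
        rw [← hqx]
        exact hx
      have hfin := dual_reversal g' Qf hLg' hQfL (fun ω h => hg'Qf ω h)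
        (u := sc.symm x) (v := sharp'.symm x) hQfx ?_
      · show q' x < 0
        rwa [hg'app, sharp'.apply_symm_apply] at hfin
      · intro ψ
        rw [hpolarQf, sc.apply_symm_apply, hg'def, polarForm_comp]
        simp only [LinearEquiv.coe_coe, LinearEquiv.apply_symm_apply]
        rw [polarForm_comm, hsharp']
end

section
/- Let q and q′ be Lorentzian quadratic forms on a real vector space V of dimension n+1 (n ≥ 1) with q ⪯ q′. Then for every v ∈ V: (i) q(v) = 0 implies q′(v) ≤ 0; (ii) q′(v) > 0 implies q(v) > 0; (iii) q′(v) = 0 implies q(v) ≥ 0. (Lemma 2.8, part (1).) -/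
open Filter Topology

theorem QuadraticMap.map_nonpos_of_forall_add_smul_neg {V : Type*} [AddCommGroup V]
    [Module ℝ V] (Q : QuadraticForm ℝ V) {v w : V} (h : ∀ t : ℝ, 0 < t → Q (v + t • w) < 0) :
    Q v ≤ 0 := by
  have expand : ∀ t : ℝ, Q (v + t • w) = Q v + t * polar Q v w + t ^ 2 * Q w := by
    intro t
    rw [QuadraticMap.map_add Q, QuadraticMap.map_smul, polar_smul_right, smul_eq_mul, smul_eq_mul]
    ring
  have hlim : Tendsto (fun t : ℝ => Q v + t * polar Q v w + t ^ 2 * Q w) (𝓝[>] 0) (𝓝 (Q v)) := by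
    have hcont : Continuous fun t : ℝ => Q v + t * polar Q v w + t ^ 2 * Q w := by fun_prop
    simpa using hcont.tendsto 0 |>.mono_left nhdsWithin_le_nhds
  refine le_of_tendsto hlim ?_
  filter_upwards [self_mem_nhdsWithin] with t ht
  rw [← expand]
  exact (h t ht).le

theorem mink_eq (n : ℕ) (x : Fin (n + 1) → ℝ) :
    mink n x = -x 0 ^ 2 + ∑ i : Fin n, x i.succ ^ 2 := by
  simp [mink, Fin.sum_univ_succ, Fin.succ_ne_zero]

theorem mink_add_smul_single_zero (n : ℕ) (x : Fin (n + 1) → ℝ) (s t : ℝ) :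
    mink n (x + t • Pi.single 0 s) = mink n x - t * (2 * (s * x 0) + t * s ^ 2) := by
  simp only [mink_eq, Pi.add_apply, Pi.smul_apply, Pi.single_eq_same, smul_eq_mul,
    Pi.single_eq_of_ne (Fin.succ_ne_zero _), mul_zero, add_zero]
  ring

theorem exists_forall_mink_add_smul_lt (n : ℕ) (x : Fin (n + 1) → ℝ) :
    ∃ y, ∀ t : ℝ, 0 < t → mink n (x + t • y) < mink n x := by
  obtain ⟨s, hs, hsx⟩ : ∃ s : ℝ, s ≠ 0 ∧ 0 ≤ s * x 0 := by
    rcases le_total 0 (x 0) with h | h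
    exacts [⟨1, one_ne_zero, by linarith⟩, ⟨-1, by norm_num, by linarith⟩]
  refine ⟨Pi.single 0 s, fun t ht => ?_⟩
  rw [mink_add_smul_single_zero]
  have : 0 < t * (2 * (s * x 0) + t * s ^ 2) := by positivity
  linarith

theorem IsLorentzian.exists_forall_add_smul_lt {V : Type*} [AddCommGroup V] [Module ℝ V]
    {n : ℕ} {f : V → ℝ} (hf : IsLorentzian n f) (v : V) :
    ∃ w, ∀ t : ℝ, 0 < t → f (v + t • w) < f v := by
  obtain ⟨e, he⟩ := hf
  obtain ⟨y, hy⟩ := exists_forall_mink_add_smul_lt n (e.symm v)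
  refine ⟨e y, fun t ht => ?_⟩
  have hv : f v = mink n (e.symm v) := by rw [← he, e.apply_symm_apply]
  rw [hv, ← e.apply_symm_apply v, ← map_smul, ← map_add, he, e.apply_symm_apply]
  exact hy t ht

theorem IsLorentzian.map_nonpos_of_lightCone_subset {V : Type*} [AddCommGroup V] [Module ℝ V]
    {n : ℕ} {f : V → ℝ} (hf : IsLorentzian n f) (Q : QuadraticForm ℝ V)
    (hle : {v : V | f v < 0} ⊆ {v : V | Q v < 0}) {v : V} (hv : f v = 0) : Q v ≤ 0 := by
  obtain ⟨w, hw⟩ := hf.exists_forall_add_smul_lt v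
  exact Q.map_nonpos_of_forall_add_smul_neg fun t ht => hle (hv ▸ hw t ht)

theorem cone_inclusion_null_spacelike_relations_general {n : ℕ}
    {V : Type*} [AddCommGroup V] [Module ℝ V]
    (q q' : QuadraticForm ℝ V)
    (hq : IsLorentzian n ⇑q)
    (hle : {v : V | q v < 0} ⊆ {v : V | q' v < 0}) :
    ∀ v : V,
      (q v = 0 → q' v ≤ 0) ∧ (0 < q' v → 0 < q v) ∧ (q' v = 0 → 0 ≤ q v) := by
  intro v
  have null : q v = 0 → q' v ≤ 0 := hq.map_nonpos_of_lightCone_subset q' hle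
  refine ⟨null, fun hpos => ?_, fun hzero => ?_⟩
  · by_contra! hnonpos
    rcases hnonpos.lt_or_eq with hneg | hzero
    · exact (hle hneg).not_ge hpos.le
    · exact (null hzero).not_gt hpos
  · by_contra! hneg
    exact (hle hneg).ne hzero

/-- Lemma 2.8(1): if `q ⪯ q′` are Lorentzian quadratic forms, then for every `v ∈ V`:
(i) `q(v) = 0` implies `q′(v) ≤ 0`; (ii) `q′(v) > 0` implies `q(v) > 0`;
(iii) `q′(v) = 0` implies `q(v) ≥ 0`. -/
theorem cone_inclusion_null_spacelike_relations {n : ℕ} (hn : 1 ≤ n)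
    {V : Type*} [AddCommGroup V] [Module ℝ V]
    (q q' : QuadraticForm ℝ V)
    (hq : IsLorentzian n ⇑q) (hq' : IsLorentzian n ⇑q')
    (hle : {v : V | q v < 0} ⊆ {v : V | q' v < 0}) :
    ∀ v : V,
      (q v = 0 → q' v ≤ 0) ∧ (0 < q' v → 0 < q v) ∧ (q' v = 0 → 0 ≤ q v) :=
  cone_inclusion_null_spacelike_relations_general q q' hq hle
end

section
/- Let q and q′ be Lorentzian quadratic forms on a real vector space V of dimension n+1 (n ≥ 1) with q ⪯ q′. Let X be timelike for q (hence also timelike for q′) and let X′ be timelike for q′; let V^{q+} be the future cone of q determined by X and V^{q′+} the future cone of q′ determined by X′. Define the dual future cones V^{q♯+} := {ω ∈ V* : ♯ω ∈ V^{q+}} and V^{q′♯+} := {ω ∈ V* : ♯′ω ∈ V^{q′+}}, where ♯ and ♯′ are the musical isomorphisms of q and q′ respectively. Then V^{q+} ⊆ V^{q′+} if and only if V^{q′♯+} ⊆ V^{q♯+}. (Lemma 2.8, part (4).) -/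
namespace LorentzAux

/-! ### Real-number helper lemmas -/

lemma ev_neg {a : ℝ} (b c : ℝ) (ha : a < 0) :
    ∃ ε > 0, ∀ t : ℝ, 0 < t → t ≤ ε → a + t * b + t ^ 2 * c < 0 := by
  refine ⟨min 1 ((-a) / (2 * (|b| + |c| + 1))),
    lt_min one_pos (div_pos (by linarith) (by positivity)), ?_⟩
  intro t ht htle
  have h1 : t ≤ 1 := le_trans htle (min_le_left _ _)
  have hd : (0:ℝ) < 2 * (|b| + |c| + 1) := by positivity
  have h2 : t ≤ (-a) / (2 * (|b| + |c| + 1)) := le_trans htle (min_le_right _ _)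
  have h2' : t * (2 * (|b| + |c| + 1)) ≤ -a := by
    rw [← le_div_iff₀ hd]; exact h2
  have hb : t * b ≤ t * |b| := by nlinarith [le_abs_self b]
  have ht2 : t ^ 2 ≤ t := by nlinarith
  have hc : t ^ 2 * c ≤ t * |c| := by
    have e1 : t ^ 2 * c ≤ t ^ 2 * |c| := mul_le_mul_of_nonneg_left (le_abs_self c) (sq_nonneg t)
    have e2 : t ^ 2 * |c| ≤ t * |c| := mul_le_mul_of_nonneg_right ht2 (abs_nonneg c)
    linarith
  nlinarith [abs_nonneg b, abs_nonneg c]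

lemma limit_quad {a b c : ℝ} (h : ∀ t : ℝ, 0 < t → t ≤ 1 → a + t * b + t ^ 2 * c < 0) :
    a ≤ 0 := by
  by_contra hpos
  push_neg at hpos
  obtain ⟨ε, hε, hev⟩ := ev_neg (-b) (-c) (show -a < 0 by linarith)
  have ht : 0 < min ε 1 := lt_min hε one_pos
  have h1 := h (min ε 1) ht (min_le_right _ _)
  have h2 := hev (min ε 1) ht (min_le_left _ _)
  nlinarith

lemma limit_lin {a b : ℝ} (h : ∀ t : ℝ, 0 < t → t < 1 → (1 - t) * a + t * b < 0) :
    b ≤ 0 := by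
  by_contra hb
  push_neg at hb
  rcases le_or_gt 0 a with ha | ha
  · have := h (1/2) (by norm_num) (by norm_num); nlinarith
  · have hba : 0 < b - a := by linarith
    have ht1 : (0:ℝ) < -a / (b - a) := div_pos (by linarith) hba
    have ht2 : -a / (b - a) < 1 := by rw [div_lt_one hba]; linarith
    have hval : (1 - -a / (b - a)) * a + (-a / (b - a)) * b = 0 := by
      field_simp
      ring
    linarith [h _ ht1 ht2]

/-! ### The Minkowski bilinear form -/

def md (n : ℕ) (x y : Fin (n + 1) → ℝ) : ℝ :=
  ∑ i, (if i = 0 then (-1 : ℝ) else 1) * (x i * y i)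

lemma md_comm (n : ℕ) (x y : Fin (n + 1) → ℝ) : md n x y = md n y x :=
  Finset.sum_congr rfl fun i _ => by ring

lemma mink_eq_md (n : ℕ) (x : Fin (n + 1) → ℝ) : mink n x = md n x x :=
  Finset.sum_congr rfl fun i _ => by ring

lemma mink_add (n : ℕ) (x y : Fin (n + 1) → ℝ) :
    mink n (x + y) = mink n x + mink n y + 2 * md n x y := by
  rw [mink, mink, mink, md, Finset.mul_sum, ← Finset.sum_add_distrib, ← Finset.sum_add_distrib]
  refine Finset.sum_congr rfl fun i _ => ?_
  simp only [Pi.add_apply]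
  ring

lemma mink_zero (n : ℕ) : mink n (0 : Fin (n + 1) → ℝ) = 0 := by
  simp [mink]

lemma md_succ (n : ℕ) (x y : Fin (n + 1) → ℝ) :
    md n x y = -(x 0 * y 0) + ∑ j : Fin n, x j.succ * y j.succ := by
  rw [md, Fin.sum_univ_succ]
  simp [Fin.succ_ne_zero]

lemma mink_succ (n : ℕ) (x : Fin (n + 1) → ℝ) :
    mink n x = -(x 0 ^ 2) + ∑ j : Fin n, x j.succ ^ 2 := by
  rw [mink, Fin.sum_univ_succ]
  simp [Fin.succ_ne_zero]

/-- Sign lemma: for `X` timelike and `y` causal nonzero, `⟨X,y⟩` has the opposite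
sign of `X₀ y₀` (in particular both are nonzero). -/
lemma md_sign {n : ℕ} {X y : Fin (n + 1) → ℝ} (hX : mink n X < 0) (hy : mink n y ≤ 0)
    (hy0 : y ≠ 0) : md n X y * (X 0 * y 0) < 0 := by
  have hXe := mink_succ n X
  have hye := mink_succ n y
  have hmd := md_succ n X y
  set a := X 0 with ha
  set b := y 0 with hb
  set A := ∑ j : Fin n, X j.succ ^ 2 with hA
  set Bs := ∑ j : Fin n, y j.succ ^ 2 with hBs
  set P := ∑ j : Fin n, X j.succ * y j.succ with hP
  have hAnn : 0 ≤ A := Finset.sum_nonneg fun j _ => sq_nonneg _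
  have hBnn : 0 ≤ Bs := Finset.sum_nonneg fun j _ => sq_nonneg _
  have hAlt : A < a ^ 2 := by nlinarith
  have hBle : Bs ≤ b ^ 2 := by nlinarith
  have hCS : P ^ 2 ≤ A * Bs := by
    simpa using Finset.sum_mul_sq_le_sq_mul_sq Finset.univ
      (fun j : Fin n => X j.succ) (fun j : Fin n => y j.succ)
  have hbne : b ≠ 0 := by
    intro hb0
    apply hy0
    have hBz : Bs = 0 := by nlinarith
    have hall : ∀ j : Fin n, y j.succ = 0 := by
      intro j
      have := (Finset.sum_eq_zero_iff_of_nonneg (fun j _ => sq_nonneg (y j.succ))).mp hBz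
        j (Finset.mem_univ j)
      exact sq_eq_zero_iff.mp this
    funext i
    refine Fin.cases ?_ ?_ i
    · exact hb0
    · exact hall
  have hPlt : P ^ 2 < a ^ 2 * b ^ 2 := by
    rcases eq_or_lt_of_le hBnn with hBz | hBpos
    · have : P ^ 2 ≤ 0 := by nlinarith
      have hb2 : 0 < b ^ 2 := by positivity
      nlinarith
    · have hb2 : 0 < b ^ 2 := by positivity
      nlinarith
  rw [hmd]
  nlinarith [sq_nonneg (P - a * b)]

/-- Characterization of the open future cone of the Minkowski form. -/
lemma mink_cone_iff {n : ℕ} {X u : Fin (n + 1) → ℝ} (hX : mink n X < 0) :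
    (mink n u < 0 ∧ md n X u < 0) ↔
      ∀ y, y ≠ 0 → mink n y ≤ 0 → md n X y ≤ 0 → md n u y < 0 := by
  have hX0 : X ≠ 0 := by
    rintro rfl
    rw [mink_zero] at hX
    exact absurd hX (lt_irrefl 0)
  constructor
  · rintro ⟨hu1, hu2⟩ y hy0 hyc hXy
    have hu0 : u ≠ 0 := by
      rintro rfl
      rw [mink_zero] at hu1
      exact absurd hu1 (lt_irrefl 0)
    have s1 := md_sign hX hu1.le hu0
    have s2 := md_sign hX hyc hy0
    have h1 : 0 < X 0 * u 0 := by nlinarith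
    have hmdXy : md n X y < 0 := by
      rcases lt_or_eq_of_le hXy with h | h
      · exact h
      · exfalso; rw [h, zero_mul] at s2; exact absurd s2 (lt_irrefl 0)
    have h2 : 0 < X 0 * y 0 := by nlinarith
    have h3 : 0 < u 0 * y 0 := by nlinarith [mul_pos h1 h2, sq_nonneg (X 0)]
    have s3 := md_sign hu1 hyc hy0
    nlinarith
  · intro h
    have hXmd : md n X X ≤ 0 := by rw [← mink_eq_md]; exact hX.le
    have hXu : md n u X < 0 := h X hX0 hX.le hXmd
    have hXu' : md n X u < 0 := by rw [md_comm]; exact hXu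
    refine ⟨?_, hXu'⟩
    by_contra hmu
    push_neg at hmu
    set A := ∑ j : Fin n, u j.succ ^ 2 with hA
    have hAnn : 0 ≤ A := Finset.sum_nonneg fun j _ => sq_nonneg _
    have hu02 : u 0 ^ 2 ≤ A := by
      have := mink_succ n u; nlinarith
    have hApos : 0 < A := by
      rcases eq_or_lt_of_le hAnn with hz | hpos
      · exfalso
        have hu00 : u 0 = 0 := by nlinarith
        have hall : ∀ j : Fin n, u j.succ = 0 := by
          intro j
          have := (Finset.sum_eq_zero_iff_of_nonneg (fun j _ => sq_nonneg (u j.succ))).mp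
            hz.symm j (Finset.mem_univ j)
          exact sq_eq_zero_iff.mp this
        have : u = 0 := by
          funext i
          exact Fin.cases hu00 hall i
        rw [this] at hXu'
        simp [md] at hXu'
      · exact hpos
    set r := Real.sqrt A with hrdef
    have hr : 0 < r := Real.sqrt_pos.mpr hApos
    have hr2 : r ^ 2 = A := Real.sq_sqrt hAnn
    have hX0' : X 0 ≠ 0 := by
      have h1 := mink_succ n X
      have h2 : 0 ≤ ∑ j : Fin n, X j.succ ^ 2 := Finset.sum_nonneg fun j _ => sq_nonneg _
      intro h0
      rw [h0] at h1
      nlinarith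
    set σ : ℝ := if 0 < X 0 then 1 else -1 with hσ
    have hσX : 0 < σ * X 0 := by
      rw [hσ]
      split_ifs with hpos
      · simpa using hpos
      · push_neg at hpos
        have : X 0 < 0 := lt_of_le_of_ne hpos hX0'
        nlinarith
    have hσ2 : σ ^ 2 = 1 := by rw [hσ]; split_ifs <;> norm_num
    set y : Fin (n + 1) → ℝ := fun i => if i = 0 then σ * r else u i with hy
    have hy0v : y 0 = σ * r := by simp [hy]
    have hysucc : ∀ j : Fin n, y j.succ = u j.succ := by
      intro j; simp [hy, Fin.succ_ne_zero]
    have hysum : ∑ j : Fin n, y j.succ ^ 2 = A := by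
      rw [hA]; exact Finset.sum_congr rfl fun j _ => by rw [hysucc]
    have hyc : mink n y ≤ 0 := by
      rw [mink_succ, hy0v, hysum]; nlinarith
    have hyne : y ≠ 0 := by
      intro hcon
      have h0 := congrFun hcon 0
      rw [hy0v] at h0
      have hσne : σ ≠ 0 := by intro hz; rw [hz] at hσ2; norm_num at hσ2
      exact absurd h0 (mul_ne_zero hσne hr.ne')
    have hXypos : 0 < X 0 * y 0 := by rw [hy0v]; nlinarith
    have hXy : md n X y ≤ 0 := by
      have s := md_sign hX hyc hyne
      nlinarith
    have hmdu := h y hyne hyc hXy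
    have hmd : md n u y = -(u 0 * (σ * r)) + A := by
      rw [md_succ, hy0v]
      congr 1
      rw [hA]
      exact Finset.sum_congr rfl fun j _ => by rw [hysucc]; ring
    rw [hmd] at hmdu
    nlinarith [sq_nonneg (σ * r - u 0)]

/-! ### Abstract polar-form algebra -/

variable {V : Type*} [AddCommGroup V] [Module ℝ V]

lemma pf_comm (q : QuadraticForm ℝ V) (x y : V) : polarForm q x y = polarForm q y x := by
  rw [polarForm, polarForm, add_comm]
  ring_nf

lemma pf_polar (q : QuadraticForm ℝ V) (x y : V) :
    polarForm q x y = QuadraticMap.polar (⇑q) x y / 2 := rfl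

lemma pf_add_left (q : QuadraticForm ℝ V) (x x' y : V) :
    polarForm q (x + x') y = polarForm q x y + polarForm q x' y := by
  rw [pf_polar, pf_polar, pf_polar, QuadraticMap.polar_add_left]
  ring

lemma pf_smul_left (q : QuadraticForm ℝ V) (a : ℝ) (x y : V) :
    polarForm q (a • x) y = a * polarForm q x y := by
  rw [pf_polar, pf_polar, QuadraticMap.polar_smul_left, smul_eq_mul]
  ring

lemma pf_add_right (q : QuadraticForm ℝ V) (x y y' : V) :
    polarForm q x (y + y') = polarForm q x y + polarForm q x y' := by
  rw [pf_comm, pf_add_left, pf_comm q y x, pf_comm q y' x]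

lemma pf_smul_right (q : QuadraticForm ℝ V) (a : ℝ) (x y : V) :
    polarForm q x (a • y) = a * polarForm q x y := by
  rw [pf_comm, pf_smul_left, pf_comm]

lemma pf_self (q : QuadraticForm ℝ V) (x : V) : polarForm q x x = q x := by
  rw [polarForm, ← two_smul ℝ x, QuadraticMap.map_smul, smul_eq_mul]
  ring

lemma pf_expand (q : QuadraticForm ℝ V) (x y : V) :
    q (x + y) = q x + q y + 2 * polarForm q x y := by
  rw [polarForm]; ring

lemma pf_comb_left (q : QuadraticForm ℝ V) (a b : ℝ) (x y z : V) :
    polarForm q (a • x + b • y) z = a * polarForm q x z + b * polarForm q y z := by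
  rw [pf_add_left, pf_smul_left, pf_smul_left]

lemma pf_comb_right (q : QuadraticForm ℝ V) (a b : ℝ) (z x y : V) :
    polarForm q z (a • x + b • y) = a * polarForm q z x + b * polarForm q z y := by
  rw [pf_add_right, pf_smul_right, pf_smul_right]

lemma pf_add_smul_left (q : QuadraticForm ℝ V) (s : ℝ) (x y z : V) :
    polarForm q (x + s • y) z = polarForm q x z + s * polarForm q y z := by
  rw [pf_add_left, pf_smul_left]

lemma pf_add_smul_right (q : QuadraticForm ℝ V) (s : ℝ) (z x y : V) :
    polarForm q z (x + s • y) = polarForm q z x + s * polarForm q z y := by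
  rw [pf_add_right, pf_smul_right]

lemma q_comb (q : QuadraticForm ℝ V) (a b : ℝ) (x y : V) :
    q (a • x + b • y) = a ^ 2 * q x + b ^ 2 * q y + 2 * (a * b) * polarForm q x y := by
  rw [pf_expand, QuadraticMap.map_smul, QuadraticMap.map_smul, smul_eq_mul, smul_eq_mul,
    pf_smul_left, pf_smul_right]
  ring

lemma q_add_smul (q : QuadraticForm ℝ V) (s : ℝ) (x y : V) :
    q (x + s • y) = q x + s * (2 * polarForm q x y) + s ^ 2 * q y := by
  rw [pf_expand, QuadraticMap.map_smul, smul_eq_mul, pf_smul_right]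
  ring

/-! ### Transfer of the cone characterization -/

lemma cone_iff {n : ℕ} {q : QuadraticForm ℝ V} (hq : IsLorentzian n ⇑q)
    {X : V} (hX : q X < 0) (u : V) :
    (q u < 0 ∧ polarForm q X u < 0) ↔
      ∀ v, v ≠ 0 → q v ≤ 0 → polarForm q X v ≤ 0 → polarForm q u v < 0 := by
  obtain ⟨e, he⟩ := hq
  have hpf : ∀ x y, polarForm q (e x) (e y) = md n x y := by
    intro x y
    rw [polarForm, ← map_add, he, he, he, mink_add]
    ring
  have hqe : ∀ w : V, q w = mink n (e.symm w) := by
    intro w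
    conv_lhs => rw [← e.apply_symm_apply w]
    rw [he]
  have hkey : ∀ w z : V, polarForm q w z = md n (e.symm w) (e.symm z) := by
    intro w z
    conv_lhs => rw [← e.apply_symm_apply w, ← e.apply_symm_apply z]
    rw [hpf]
  have hXm : mink n (e.symm X) < 0 := by rw [← hqe]; exact hX
  constructor
  · rintro ⟨h1, h2⟩ v hv hv1 hv2
    rw [hkey]
    refine (mink_cone_iff hXm).mp ⟨by rw [← hqe]; exact h1, by rw [← hkey]; exact h2⟩
      (e.symm v) ?_ (by rw [← hqe]; exact hv1) (by rw [← hkey]; exact hv2)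
    simpa using hv
  · intro h
    have hm : ∀ y, y ≠ 0 → mink n y ≤ 0 → md n (e.symm X) y ≤ 0 →
        md n (e.symm u) y < 0 := by
      intro y hy hy1 hy2
      have hv : e y ≠ 0 := by simpa using hy
      have h1 : q (e y) ≤ 0 := by rw [he]; exact hy1
      have h2 : polarForm q X (e y) ≤ 0 := by
        rw [hkey]; simpa using hy2
      have := h (e y) hv h1 h2
      rw [hkey] at this
      simpa using this
    have := (mink_cone_iff hXm).mpr hm
    exact ⟨by rw [hqe]; exact this.1, by rw [hkey]; exact this.2⟩

/-! ### Nondegeneracy via the musical isomorphism -/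

lemma exists_pos_pf {q : QuadraticForm ℝ V} (sharp : (V →ₗ[ℝ] ℝ) ≃ₗ[ℝ] V)
    (hsharp : ∀ (ω : V →ₗ[ℝ] ℝ) (v : V), polarForm q (sharp ω) v = ω v)
    {v : V} (hv : v ≠ 0) : ∃ z, 0 < polarForm q z v := by
  have hne : ∃ z, polarForm q z v ≠ 0 := by
    by_contra hall
    push_neg at hall
    apply hv
    have hω : sharp.symm v = 0 := by
      ext w
      have := hsharp (sharp.symm v) w
      rw [sharp.apply_symm_apply] at this
      rw [← this, pf_comm]
      simpa using hall w
    calc v = sharp (sharp.symm v) := (sharp.apply_symm_apply v).symm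
      _ = sharp 0 := by rw [hω]
      _ = 0 := map_zero _
  obtain ⟨z, hz⟩ := hne
  rcases lt_or_gt_of_ne hz with h | h
  · exact ⟨(-1 : ℝ) • z, by rw [pf_smul_left]; linarith⟩
  · exact ⟨z, h⟩

/-! ### Closure lemmas -/

lemma closure_le {q q' : QuadraticForm ℝ V}
    (hle : ∀ w, q w < 0 → q' w < 0) {X : V} (hX : q X < 0)
    (v : V) (hv : q v ≤ 0) : q' v ≤ 0 := by
  set c : ℝ := if polarForm q X v ≤ 0 then 1 else -1 with hc
  have hc2 : c ^ 2 = 1 := by rw [hc]; split_ifs <;> norm_num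
  have hcB : c * polarForm q X v ≤ 0 := by
    rw [hc]; split_ifs with h
    · simpa using h
    · push_neg at h; nlinarith
  apply limit_quad (b := c * (2 * polarForm q' v X)) (c := q' X)
  intro t ht ht1
  have htc : (t * c) ^ 2 = t ^ 2 := by rw [mul_pow, hc2, mul_one]
  have hqneg : q (v + (t * c) • X) < 0 := by
    rw [q_add_smul, htc]
    have h1 : (t * c) * (2 * polarForm q v X) ≤ 0 := by
      rw [pf_comm]
      nlinarith [mul_le_mul_of_nonneg_left hcB ht.le]
    have h2 : t ^ 2 * q X < 0 := mul_neg_of_pos_of_neg (by positivity) hX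
    linarith
  have := hle _ hqneg
  rw [q_add_smul, htc] at this
  nlinarith

lemma seg_closure {q q' : QuadraticForm ℝ V} {X X' : V} (hX : q X < 0)
    (hsub : ∀ w, q w < 0 → polarForm q X w < 0 → polarForm q' X' w < 0)
    {v : V} (hv : q v ≤ 0) (hBv : polarForm q X v ≤ 0) : polarForm q' X' v ≤ 0 := by
  apply limit_lin (a := polarForm q' X' X)
  intro t ht ht1
  have h1t : (0:ℝ) < 1 - t := by linarith
  have hw1 : q ((1 - t) • X + t • v) < 0 := by
    rw [q_comb]
    nlinarith [mul_pos h1t h1t, mul_pos h1t ht, sq_nonneg t]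
  have hw2 : polarForm q X ((1 - t) • X + t • v) < 0 := by
    rw [pf_comb_right, pf_self]
    nlinarith [mul_pos h1t ht]
  have := hsub _ hw1 hw2
  rw [pf_comb_right] at this
  exact this

end LorentzAux

open LorentzAux in
/-- Lemma 2.8(4): with `q ⪯ q′` Lorentzian, `X` timelike for `q`, `X′` timelike for `q′`,
the inclusion of future cones `V^{q+} ⊆ V^{q′+}` holds iff the reversed inclusion
`V^{q′♯+} ⊆ V^{q♯+}` of the dual future cones holds. Here the future cone of `q`
determined by `X` is `{v | q v < 0 ∧ B(X,v) < 0}` and the dual future cone is its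
preimage under the musical isomorphism. -/
theorem future_cone_inclusion_iff_dual_future_cone_inclusion {n : ℕ} (hn : 1 ≤ n)
    {V : Type*} [AddCommGroup V] [Module ℝ V]
    (q q' : QuadraticForm ℝ V)
    (hq : IsLorentzian n ⇑q) (hq' : IsLorentzian n ⇑q')
    (hle : {v : V | q v < 0} ⊆ {v : V | q' v < 0})
    (X X' : V) (hX : q X < 0) (hX' : q' X' < 0)
    (sharp sharp' : (V →ₗ[ℝ] ℝ) ≃ₗ[ℝ] V)
    (hsharp : ∀ (ω : V →ₗ[ℝ] ℝ) (v : V), polarForm q (sharp ω) v = ω v)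
    (hsharp' : ∀ (ω : V →ₗ[ℝ] ℝ) (v : V), polarForm q' (sharp' ω) v = ω v) :
    ({v : V | q v < 0 ∧ polarForm q X v < 0} ⊆ {v : V | q' v < 0 ∧ polarForm q' X' v < 0}) ↔
      ({ω : V →ₗ[ℝ] ℝ | sharp' ω ∈ {v : V | q' v < 0 ∧ polarForm q' X' v < 0}} ⊆
        {ω : V →ₗ[ℝ] ℝ | sharp ω ∈ {v : V | q v < 0 ∧ polarForm q X v < 0}}) := by
  constructor
  · -- forward direction
    intro h ω hω
    simp only [Set.mem_setOf_eq] at h hω ⊢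
    obtain ⟨h1', h2'⟩ := hω
    have hsub : ∀ w, q w < 0 → polarForm q X w < 0 → polarForm q' X' w < 0 := by
      intro w hw1 hw2
      exact (h ⟨hw1, hw2⟩).2
    rw [cone_iff hq hX]
    intro v hv hv1 hv2
    have hq'v : q' v ≤ 0 := closure_le (fun w hw => (hle hw : q' w < 0)) hX v hv1
    have hB'v : polarForm q' X' v ≤ 0 := seg_closure hX hsub hv1 hv2
    have hfin := (cone_iff hq' hX' (sharp' ω)).mp ⟨h1', h2'⟩ v hv hq'v hB'v
    rw [hsharp' ω v] at hfin
    rw [hsharp ω v]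
    exact hfin
  · -- reverse direction
    intro h u hu
    simp only [Set.mem_setOf_eq] at h hu ⊢
    have hTC : ∀ w, q' w < 0 → polarForm q' X' w < 0 →
        q (sharp (sharp'.symm w)) < 0 ∧ polarForm q X (sharp (sharp'.symm w)) < 0 := by
      intro w hw1 hw2
      have hmem' : sharp'.symm w ∈ {ω : V →ₗ[ℝ] ℝ |
          q' (sharp' ω) < 0 ∧ polarForm q' X' (sharp' ω) < 0} := by
        simp only [Set.mem_setOf_eq, sharp'.apply_symm_apply]
        exact ⟨hw1, hw2⟩
      exact h hmem'
    have weak : ∀ u'', (q u'' < 0 ∧ polarForm q X u'' < 0) → ∀ v, q' v ≤ 0 →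
        polarForm q' X' v ≤ 0 → polarForm q' u'' v ≤ 0 := by
      intro u'' hu'' v hv1 hv2
      apply limit_lin (a := polarForm q' u'' X')
      intro t ht ht1
      have h1t : (0:ℝ) < 1 - t := by linarith
      have hw1 : q' ((1 - t) • X' + t • v) < 0 := by
        rw [q_comb]
        nlinarith [mul_pos h1t h1t, mul_pos h1t ht, sq_nonneg t]
      have hw2 : polarForm q' X' ((1 - t) • X' + t • v) < 0 := by
        rw [pf_comb_right, pf_self]
        nlinarith [mul_pos h1t ht]
      obtain ⟨hz1, hz2⟩ := hTC _ hw1 hw2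
      set z := sharp (sharp'.symm ((1 - t) • X' + t • v)) with hzdef
      have hz0 : z ≠ 0 := by
        intro h0
        rw [h0] at hz1
        rw [QuadraticMap.map_zero] at hz1
        exact absurd hz1 (lt_irrefl 0)
      have hmain := (cone_iff hq hX u'').mp hu'' z hz0 hz1.le hz2.le
      rw [pf_comm] at hmain
      rw [hzdef, hsharp (sharp'.symm ((1 - t) • X' + t • v)) u''] at hmain
      rw [← hsharp' (sharp'.symm ((1 - t) • X' + t • v)) u''] at hmain
      rw [sharp'.apply_symm_apply] at hmain
      rw [pf_comm, pf_comb_right] at hmain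
      exact hmain
    refine (cone_iff hq' hX' u).mpr ?_
    intro v hv hv1 hv2
    have hw := weak u hu v hv1 hv2
    rcases lt_or_eq_of_le hw with h' | h'
    · exact h'
    · exfalso
      obtain ⟨z, hz⟩ := exists_pos_pf sharp' hsharp' hv
      obtain ⟨ε1, hε1, he1⟩ := ev_neg (2 * polarForm q u z) (q z) hu.1
      obtain ⟨ε2, hε2, he2⟩ := ev_neg (polarForm q X z) 0 hu.2
      set ε := min ε1 ε2 with hε
      have hεpos : 0 < ε := lt_min hε1 hε2
      have hc1 : q (u + ε • z) < 0 := by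
        rw [q_add_smul]
        have := he1 ε hεpos (min_le_left _ _)
        nlinarith
      have hc2 : polarForm q X (u + ε • z) < 0 := by
        rw [pf_add_smul_right]
        have := he2 ε hεpos (min_le_right _ _)
        nlinarith
      have hfin := weak (u + ε • z) ⟨hc1, hc2⟩ v hv1 hv2
      rw [pf_add_smul_left, ← h'] at hfin
      nlinarith [mul_pos hεpos hz]
end

section
/- Let q be a Lorentzian quadratic form on a real vector space V of dimension n+1 (n ≥ 1), with polar form B, and fix a timelike vector X. Then for all timelike vectors Y and Z: (i) B(Y,Z) ≠ 0; (ii) B(Y,Z) < 0 if and only if B(X,Y) and B(X,Z) have the same sign (i.e. B(X,Y) < 0 ↔ B(X,Z) < 0), which says Y and Z lie in the same half of the light cone; (iii) B(Y,Z) > 0 if and only if exactly one of B(X,Y) < 0, B(X,Z) < 0 holds, which says Y and Z lie in opposite halves of the light cone. (Proposition 2.7.) -/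
/-- The polar form of the Minkowski quadratic form. -/
noncomputable def bm (n : ℕ) (x y : Fin (n + 1) → ℝ) : ℝ :=
  ∑ i, (if i = 0 then (-1 : ℝ) else 1) * (x i * y i)

lemma bm_eq (n : ℕ) (x y : Fin (n + 1) → ℝ) :
    (mink n (x + y) - mink n x - mink n y) / 2 = bm n x y := by
  unfold mink bm
  rw [← Finset.sum_sub_distrib, ← Finset.sum_sub_distrib, Finset.sum_div]
  refine Finset.sum_congr rfl fun i _ => ?_
  simp only [Pi.add_apply]
  split_ifs <;> ring

lemma mink_split (n : ℕ) (x : Fin (n + 1) → ℝ) :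
    mink n x = -x 0 ^ 2 + ∑ i ∈ Finset.univ.erase 0, x i ^ 2 := by
  unfold mink
  rw [← Finset.sum_erase_add _ _ (Finset.mem_univ 0)]
  rw [add_comm, Finset.sum_congr rfl fun i hi => by
    rw [if_neg (Finset.ne_of_mem_erase hi), one_mul]]
  norm_num

lemma bm_split (n : ℕ) (x y : Fin (n + 1) → ℝ) :
    bm n x y = -(x 0 * y 0) + ∑ i ∈ Finset.univ.erase 0, x i * y i := by
  unfold bm
  rw [← Finset.sum_erase_add _ _ (Finset.mem_univ 0)]
  rw [add_comm, Finset.sum_congr rfl fun i hi => by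
    rw [if_neg (Finset.ne_of_mem_erase hi), one_mul]]
  norm_num

/-- Key: for timelike `x, y`, the Minkowski polar form has sign opposite to `x₀ y₀`. -/
lemma bm_key {n : ℕ} {x y : Fin (n + 1) → ℝ} (hx : mink n x < 0) (hy : mink n y < 0) :
    bm n x y * (x 0 * y 0) < 0 := by
  rw [mink_split] at hx hy
  rw [bm_split]
  set s := Finset.univ.erase (0 : Fin (n + 1))
  have hSx : (0:ℝ) ≤ ∑ i ∈ s, x i ^ 2 := Finset.sum_nonneg fun i _ => sq_nonneg _
  have hSy : (0:ℝ) ≤ ∑ i ∈ s, y i ^ 2 := Finset.sum_nonneg fun i _ => sq_nonneg _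
  have hcs := Finset.sum_mul_sq_le_sq_mul_sq s x y
  nlinarith [sq_nonneg (∑ i ∈ s, x i * y i - x 0 * y 0),
    sq_nonneg (∑ i ∈ s, x i * y i + x 0 * y 0), sq_nonneg (x 0 * y 0)]

lemma sign_lemma {a b c : ℝ} (ha : a ≠ 0) (hb : b ≠ 0) (hc : c ≠ 0) :
    (0 < b * c ↔ (0 < a * b ↔ 0 < a * c)) ∧ (b * c < 0 ↔ Xor' (0 < a * b) (0 < a * c)) := by
  rcases ha.lt_or_gt with ha | ha <;> rcases hb.lt_or_gt with hb | hb <;>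
    rcases hc.lt_or_gt with hc | hc <;>
    simp [Xor', mul_pos_iff, mul_neg_iff, ha, hb, hc, ha.not_gt, hb.not_gt, hc.not_gt,
      asymm ha, asymm hb, asymm hc]

lemma opp_sign {p t : ℝ} (h : p * t < 0) : p ≠ 0 ∧ (p < 0 ↔ 0 < t) ∧ (0 < p ↔ t < 0) := by
  refine ⟨fun hp => by rw [hp] at h; simp at h, ?_, ?_⟩ <;>
    constructor <;> intro <;> nlinarith

/-- Proposition 2.7: with `q` Lorentzian, `X` a fixed timelike vector and `Y, Z` timelike:
(i) `B(Y,Z) ≠ 0`; (ii) `B(Y,Z) < 0` iff `B(X,Y)` and `B(X,Z)` have the same sign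
(`Y,Z` in the same half of the light cone); (iii) `B(Y,Z) > 0` iff exactly one of
`B(X,Y) < 0`, `B(X,Z) < 0` holds (`Y,Z` in opposite halves). -/
theorem timelike_polar_sign {n : ℕ} (hn : 1 ≤ n)
    {V : Type*} [AddCommGroup V] [Module ℝ V]
    (q : QuadraticForm ℝ V) (hq : IsLorentzian n ⇑q)
    (X : V) (hX : q X < 0) (Y Z : V) (hY : q Y < 0) (hZ : q Z < 0) :
    polarForm q Y Z ≠ 0 ∧
      (polarForm q Y Z < 0 ↔ (polarForm q X Y < 0 ↔ polarForm q X Z < 0)) ∧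
      (0 < polarForm q Y Z ↔ Xor' (polarForm q X Y < 0) (polarForm q X Z < 0)) := by
  obtain ⟨e, he⟩ := hq
  set x := e.symm X with hxdef
  set y := e.symm Y with hydef
  set z := e.symm Z with hzdef
  have hp : ∀ v w : Fin (n + 1) → ℝ, polarForm q (e v) (e w) = bm n v w := by
    intro v w
    unfold polarForm
    rw [← map_add e, he, he, he, bm_eq]
  have pYZ : polarForm q Y Z = bm n y z := by
    conv_lhs => rw [← e.apply_symm_apply Y, ← e.apply_symm_apply Z]
    exact hp y z
  have pXY : polarForm q X Y = bm n x y := by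
    conv_lhs => rw [← e.apply_symm_apply X, ← e.apply_symm_apply Y]
    exact hp x y
  have pXZ : polarForm q X Z = bm n x z := by
    conv_lhs => rw [← e.apply_symm_apply X, ← e.apply_symm_apply Z]
    exact hp x z
  have hmx : mink n x < 0 := by rw [← he x, e.apply_symm_apply]; exact hX
  have hmy : mink n y < 0 := by rw [← he y, e.apply_symm_apply]; exact hY
  have hmz : mink n z < 0 := by rw [← he z, e.apply_symm_apply]; exact hZ
  have k1 := bm_key hmy hmz
  have k2 := bm_key hmx hmy
  have k3 := bm_key hmx hmz
  obtain ⟨n1, i1, i1'⟩ := opp_sign k1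
  obtain ⟨n2, i2, _⟩ := opp_sign k2
  obtain ⟨n3, i3, _⟩ := opp_sign k3
  have hxy : x 0 * y 0 ≠ 0 := by
    intro h; rw [h, mul_zero] at k2; exact lt_irrefl _ k2
  have hyz : y 0 * z 0 ≠ 0 := by
    intro h; rw [h, mul_zero] at k1; exact lt_irrefl _ k1
  have hx0 : x 0 ≠ 0 := fun h => hxy (by rw [h, zero_mul])
  have hy0 : y 0 ≠ 0 := fun h => hxy (by rw [h, mul_zero])
  have hz0 : z 0 ≠ 0 := fun h => hyz (by rw [h, mul_zero])
  obtain ⟨s1, s2⟩ := sign_lemma hx0 hy0 hz0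
  rw [pYZ, pXY, pXZ]
  exact ⟨n1, by rw [i1, i2, i3]; exact s1, by rw [i1', i2, i3]; exact s2⟩
end

section
/- Let q be a Lorentzian quadratic form on a real vector space V of dimension n+1 (n ≥ 1), with polar form B, let X be timelike for q, and for a ∈ (0,1) define the quadratic form q_a(v) := q(v) + (a−1)·B(X,v)²/q(X). Then: (i) q_a is Lorentzian; (ii) q_a(X) = a·q(X) < 0, so X is timelike for q_a; (iii) every nonzero v ∈ V with q_a(v) ≤ 0 satisfies q(v) < 0; in particular the open light cone of q_a is strictly contained in the open light cone of q (the closure of the cone of q_a, minus the origin, lies in the open cone of q). (Construction (4.1) in the proof of Proposition 4.4.) -/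
section Aux

variable {V : Type*} [AddCommGroup V] [Module ℝ V]

lemma polarForm_eq_polar (q : QuadraticForm ℝ V) (v w : V) :
    polarForm q v w = QuadraticMap.polar ⇑q v w / 2 := by
  simp [polarForm, QuadraticMap.polar]

lemma polarForm_add_right (q : QuadraticForm ℝ V) (x v w : V) :
    polarForm q x (v + w) = polarForm q x v + polarForm q x w := by
  simp only [polarForm_eq_polar, QuadraticMap.polar_add_right]; ring

lemma polarForm_smul_right (q : QuadraticForm ℝ V) (x v : V) (c : ℝ) :
    polarForm q x (c • v) = c * polarForm q x v := by
  simp only [polarForm_eq_polar, QuadraticMap.polar_smul_right, smul_eq_mul]; ring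

lemma polarForm_comm (q : QuadraticForm ℝ V) (v w : V) :
    polarForm q v w = polarForm q w v := by
  unfold polarForm
  rw [add_comm w v]
  ring

lemma polarForm_self (q : QuadraticForm ℝ V) (v : V) :
    polarForm q v v = q v := by
  have : v + v = (2 : ℝ) • v := by module
  rw [polarForm, this, QuadraticMap.map_smul]
  simp; ring

/-- expansion `q (v + c • X) = q v + c^2 q X + 2 c B(X,v)` -/
lemma q_add_smul (q : QuadraticForm ℝ V) (X v : V) (c : ℝ) :
    q (v + c • X) = q v + c ^ 2 * q X + 2 * c * polarForm q X v := by
  have h : q (v + c • X) - q v - q (c • X) = QuadraticMap.polar ⇑q v (c • X) := rfl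
  have h2 : QuadraticMap.polar ⇑q v (c • X) = c * QuadraticMap.polar ⇑q v X := by
    rw [QuadraticMap.polar_smul_right]; simp
  have h3 : q (c • X) = (c * c) * q X := by
    rw [QuadraticMap.map_smul]; simp
  have h4 : polarForm q X v = QuadraticMap.polar ⇑q v X / 2 := by
    rw [polarForm_comm, polarForm_eq_polar]
  linear_combination h + h2 + h3 - 2 * c * h4

/-- The linear map `v ↦ v + (c * B(X,v)) • X`. -/
noncomputable def shear (q : QuadraticForm ℝ V) (X : V) (c : ℝ) : V →ₗ[ℝ] V where
  toFun v := v + (c * polarForm q X v) • X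
  map_add' v w := by
    rw [polarForm_add_right]
    module
  map_smul' r v := by
    dsimp only [RingHom.id_apply]
    rw [polarForm_smul_right]
    module

/-- If `(1 + c * q X) * (1 + c' * q X) = 1` then the two shears are inverse. -/
noncomputable def shearEquiv (q : QuadraticForm ℝ V) (X : V) (c c' : ℝ)
    (h : c + c' + c * c' * q X = 0) : V ≃ₗ[ℝ] V := by
  refine LinearEquiv.ofLinear (shear q X c) (shear q X c') ?_ ?_
  · ext v
    simp only [LinearMap.coe_comp, Function.comp_apply, shear, LinearMap.coe_mk, AddHom.coe_mk,
      LinearMap.id_coe, id_eq]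
    rw [polarForm_add_right, polarForm_smul_right, polarForm_self]
    have : c * (polarForm q X v + c' * polarForm q X v * q X) + c' * polarForm q X v
        = (c + c' + c * c' * q X) * polarForm q X v := by ring
    rw [add_assoc, ← add_smul]
    rw [show c' * polarForm q X v + c * (polarForm q X v + c' * polarForm q X v * q X)
        = (c + c' + c * c' * q X) * polarForm q X v by ring, h]
    simp
  · ext v
    simp only [LinearMap.coe_comp, Function.comp_apply, shear, LinearMap.coe_mk, AddHom.coe_mk,
      LinearMap.id_coe, id_eq]
    rw [polarForm_add_right, polarForm_smul_right, polarForm_self]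
    rw [add_assoc, ← add_smul]
    rw [show c * polarForm q X v + c' * (polarForm q X v + c * polarForm q X v * q X)
        = (c + c' + c * c' * q X) * polarForm q X v by ring, h]
    simp

lemma shearEquiv_apply (q : QuadraticForm ℝ V) (X : V) (c c' : ℝ)
    (h : c + c' + c * c' * q X = 0) (v : V) :
    shearEquiv q X c c' h v = v + (c * polarForm q X v) • X := rfl

/-- Positivity on the orthogonal complement of a timelike vector, coordinate version. -/
lemma mink_ortho_pos {n : ℕ} (y x : Fin (n + 1) → ℝ) (hy : mink n y < 0) (hx : x ≠ 0)
    (ho : ∑ i, (if i = 0 then (-1 : ℝ) else 1) * (y i * x i) = 0) : 0 < mink n x := by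
  classical
  set F := (Finset.univ : Finset (Fin (n + 1))).erase 0 with hF
  have split : ∀ f : Fin (n + 1) → ℝ,
      (∑ i, (if i = 0 then (-1 : ℝ) else 1) * f i) = -f 0 + ∑ i ∈ F, f i := by
    intro f
    rw [← Finset.add_sum_erase Finset.univ (fun i => (if i = 0 then (-1 : ℝ) else 1) * f i)
      (Finset.mem_univ 0)]
    congr 1
    · simp
    · exact Finset.sum_congr rfl fun i hi => by
        rw [if_neg (Finset.ne_of_mem_erase hi), one_mul]
  have hy' : -(y 0) ^ 2 + ∑ i ∈ F, (y i) ^ 2 < 0 := by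
    have := split (fun i => y i ^ 2); rw [mink, this] at hy; exact hy
  have hx' := split (fun i => x i ^ 2)
  have ho' : -(y 0 * x 0) + ∑ i ∈ F, y i * x i = 0 := by
    rw [← split (fun i => y i * x i)]; exact ho
  rw [mink, hx']
  set A := ∑ i ∈ F, (y i) ^ 2 with hA
  set Bx := ∑ i ∈ F, (x i) ^ 2 with hBx
  set C := ∑ i ∈ F, y i * x i with hC
  have hCS : C ^ 2 ≤ A * Bx := Finset.sum_mul_sq_le_sq_mul_sq F y x
  have hAnn : 0 ≤ A := Finset.sum_nonneg fun i _ => sq_nonneg _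
  have hBnn : 0 ≤ Bx := Finset.sum_nonneg fun i _ => sq_nonneg _
  have hy0 : y 0 ^ 2 > 0 := by nlinarith
  have hBpos : 0 < Bx := by
    rcases lt_or_eq_of_le hBnn with h | h
    · exact h
    · exfalso
      have hall : ∀ i ∈ F, x i ^ 2 = 0 :=
        (Finset.sum_eq_zero_iff_of_nonneg (fun i _ => sq_nonneg (x i))).mp h.symm
      have hall' : ∀ i ∈ F, x i = 0 := fun i hi => by
        have := hall i hi; nlinarith [this]
      have hCz : C = 0 := Finset.sum_eq_zero fun i hi => by rw [hall' i hi, mul_zero]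
      have hx0 : x 0 = 0 := by
        have : y 0 * x 0 = 0 := by rw [hCz] at ho'; linarith
        rcases mul_eq_zero.mp this with h' | h'
        · exfalso; nlinarith
        · exact h'
      apply hx
      funext i
      by_cases hi : i = 0
      · rw [hi]; exact hx0
      · exact hall' i (Finset.mem_erase.mpr ⟨hi, Finset.mem_univ i⟩)
  -- y0 x0 = C, C² ≤ A Bx < y0² Bx ⇒ x0² < Bx
  have key : (y 0) ^ 2 * (x 0) ^ 2 ≤ A * Bx := by
    have hyx : y 0 * x 0 = C := by linarith
    calc (y 0) ^ 2 * (x 0) ^ 2 = C ^ 2 := by rw [← hyx]; ring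
      _ ≤ A * Bx := hCS
  have h1 : y 0 ^ 2 * x 0 ^ 2 < y 0 ^ 2 * Bx := by nlinarith
  have h2 : x 0 ^ 2 < Bx := (mul_lt_mul_iff_right₀ hy0).mp h1
  linarith

/-- On a Lorentzian form, a nonzero vector orthogonal to a timelike vector is spacelike. -/
lemma ortho_pos {n : ℕ} (q : QuadraticForm ℝ V) (hq : IsLorentzian n ⇑q)
    (X : V) (hX : q X < 0) (v : V) (hv : v ≠ 0) (ho : polarForm q X v = 0) : 0 < q v := by
  obtain ⟨e, he⟩ := hq
  set y := e.symm X with hy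
  set w := e.symm v with hw
  have hXe : X = e y := (e.apply_symm_apply X).symm
  have hve : v = e w := (e.apply_symm_apply v).symm
  have hw0 : w ≠ 0 := by
    intro h; apply hv; rw [hve, h, map_zero]
  have hyt : mink n y < 0 := by rw [← he]; rwa [← hXe]
  have hsum : ∑ i, (if i = 0 then (-1 : ℝ) else 1) * (y i * w i) = 0 := by
    have hpol : polarForm q X v
        = (mink n (y + w) - mink n y - mink n w) / 2 := by
      rw [polarForm, hXe, hve, ← map_add, he, he, he]
    have expand : mink n (y + w) - mink n y - mink n w
        = ∑ i, (if i = 0 then (-1 : ℝ) else 1) * (2 * (y i * w i)) := by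
      rw [mink, mink, mink, ← Finset.sum_sub_distrib, ← Finset.sum_sub_distrib]
      apply Finset.sum_congr rfl
      intro i _
      simp only [Pi.add_apply]
      ring
    have : ∑ i, (if i = 0 then (-1 : ℝ) else 1) * (2 * (y i * w i))
        = 2 * ∑ i, (if i = 0 then (-1 : ℝ) else 1) * (y i * w i) := by
      rw [Finset.mul_sum]
      apply Finset.sum_congr rfl
      intro i _; ring
    rw [hpol, expand, this] at ho
    linarith
  have := mink_ortho_pos y w hyt hw0 hsum
  rwa [← he, ← hve] at this

end Aux

/-- Construction (4.1) in the proof of Proposition 4.4: for `q` Lorentzian, `X` timelike,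
`a ∈ (0,1)` and `q_a(v) := q(v) + (a−1)·B(X,v)²/q(X)`: (i) `q_a` is Lorentzian;
(ii) `q_a(X) = a·q(X) < 0`; (iii) every nonzero `v` with `q_a(v) ≤ 0` has `q(v) < 0`. -/
theorem squeezed_cone_form_properties {n : ℕ} (hn : 1 ≤ n)
    {V : Type*} [AddCommGroup V] [Module ℝ V]
    (q : QuadraticForm ℝ V) (hq : IsLorentzian n ⇑q)
    (X : V) (hX : q X < 0) (a : ℝ) (ha : a ∈ Set.Ioo (0 : ℝ) 1) :
    IsLorentzian n (fun v : V => q v + (a - 1) * (polarForm q X v) ^ 2 / q X) ∧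
      (q X + (a - 1) * (polarForm q X X) ^ 2 / q X = a * q X ∧ a * q X < 0) ∧
      (∀ v : V, v ≠ 0 → q v + (a - 1) * (polarForm q X v) ^ 2 / q X ≤ 0 → q v < 0) := by
  obtain ⟨ha0, ha1⟩ := ha
  have hk : q X ≠ 0 := ne_of_lt hX
  set s : ℝ := Real.sqrt a with hs
  have hs0 : 0 < s := Real.sqrt_pos.mpr ha0
  have hs2 : s ^ 2 = a := Real.sq_sqrt (le_of_lt ha0)
  set c : ℝ := (s⁻¹ - 1) / q X with hc
  set c' : ℝ := (s - 1) / q X with hc'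
  have hcc : c + c' + c * c' * q X = 0 := by
    rw [hc, hc']
    field_simp [hs0.ne']
    ring
  refine ⟨?_, ⟨?_, ?_⟩, ?_⟩
  · -- (i) Lorentzian
    obtain ⟨e, he⟩ := hq
    refine ⟨e.trans (shearEquiv q X c c' hcc), fun x => ?_⟩
    simp only [LinearEquiv.trans_apply]
    rw [shearEquiv_apply, ← he x]
    set v := e x with hv
    rw [q_add_smul, polarForm_add_right, polarForm_smul_right, polarForm_self]
    have hsne : s ≠ 0 := ne_of_gt hs0
    rw [hc, ← hs2]
    field_simp
    ring
  · -- (ii) value at X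
    rw [polarForm_self]
    field_simp
    ring
  · exact mul_neg_of_pos_of_neg ha0 hX
  · -- (iii)
    intro v hv h
    set u := polarForm q X v with hu
    by_cases hu0 : u = 0
    · exfalso
      have := ortho_pos q hq X hX v hv hu0
      rw [hu0] at h
      simp at h
      linarith
    · have hupos : 0 < u ^ 2 := by positivity
      have : (a - 1) * u ^ 2 / q X > 0 := by
        apply div_pos_of_neg_of_neg
        · nlinarith
        · exact hX
      linarith
end

section
/- Let q and q′ be Lorentzian quadratic forms on a real vector space V of finite dimension n+1 (n ≥ 1), and let X be a vector that is timelike both for q and for q′. For a ∈ (0,1) define q_a(v) := q(v) + (a−1)·B(X,v)²/q(X), where B is the polar form of q. Then there exists a ∈ (0,1) such that {v ∈ V : q_a(v) < 0} ⊆ {v ∈ V : q′(v) < 0}, i.e. the open light cone of q_a is contained in the open light cone of q′. (Pointwise cone-shrinking step in the proof of Proposition 4.4.) -/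
namespace ConeSqueeze

variable {n : ℕ}

/-- standard basis vector (matching `pi_eq_sum_univ`). -/
noncomputable def δ (i : Fin (n + 1)) : Fin (n + 1) → ℝ := fun j => if i = j then 1 else 0

/-- Minkowski bilinear form. -/
noncomputable def mb (y x : Fin (n + 1) → ℝ) : ℝ :=
  ∑ i, (if i = 0 then (-1 : ℝ) else 1) * (y i * x i)

lemma polar_mink (y x : Fin (n + 1) → ℝ) :
    (mink n (y + x) - mink n y - mink n x) / 2 = mb y x := by
  rw [div_eq_iff (two_ne_zero)]
  simp only [mink, mb, ← Finset.sum_sub_distrib, Finset.sum_mul]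
  refine Finset.sum_congr rfl fun i _ => ?_
  simp only [Pi.add_apply]
  ring

lemma mink_add_smul (w Y : Fin (n + 1) → ℝ) (t : ℝ) :
    mink n (w + t • Y) = mink n w + 2 * t * mb Y w + t ^ 2 * mink n Y := by
  simp only [mink, mb, Finset.mul_sum, ← Finset.sum_add_distrib]
  refine Finset.sum_congr rfl fun i _ => ?_
  simp only [Pi.add_apply, Pi.smul_apply, smul_eq_mul]
  ring

lemma mb_sub_smul (Y x : Fin (n + 1) → ℝ) (t : ℝ) :
    mb Y (x - t • Y) = mb Y x - t * mink n Y := by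
  simp only [mink, mb, Finset.mul_sum, ← Finset.sum_sub_distrib]
  refine Finset.sum_congr rfl fun i _ => ?_
  simp only [Pi.sub_apply, Pi.smul_apply, smul_eq_mul]
  ring

lemma mink_split (x : Fin (n + 1) → ℝ) :
    mink n x = -(x 0) ^ 2 + ∑ i : Fin n, (x i.succ) ^ 2 := by
  rw [mink, Fin.sum_univ_succ]
  simp [Fin.succ_ne_zero]

lemma mb_split (y x : Fin (n + 1) → ℝ) :
    mb y x = -(y 0 * x 0) + ∑ i : Fin n, y i.succ * x i.succ := by
  rw [mb, Fin.sum_univ_succ]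
  simp [Fin.succ_ne_zero]

lemma sum_sq_split (x : Fin (n + 1) → ℝ) :
    ∑ i, (x i) ^ 2 = (x 0) ^ 2 + ∑ i : Fin n, (x i.succ) ^ 2 :=
  Fin.sum_univ_succ _

lemma linear_bound (L : (Fin (n + 1) → ℝ) →ₗ[ℝ] ℝ) (w : Fin (n + 1) → ℝ) :
    (L w) ^ 2 ≤ (∑ i, (L (δ i)) ^ 2) * (∑ i, (w i) ^ 2) := by
  have hw : L w = ∑ i, w i * L (δ i) := by
    conv_lhs => rw [pi_eq_sum_univ w, map_sum]
    refine Finset.sum_congr rfl fun i _ => ?_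
    rw [map_smul]; simp only [smul_eq_mul]; rfl
  rw [hw]
  calc (∑ i, w i * L (δ i)) ^ 2 ≤ (∑ i, (w i) ^ 2) * (∑ i, (L (δ i)) ^ 2) :=
        Finset.sum_mul_sq_le_sq_mul_sq _ _ _
    _ = _ := mul_comm _ _

set_option maxHeartbeats 1000000 in
lemma quad_bound (p : QuadraticForm ℝ (Fin (n + 1) → ℝ)) (w : Fin (n + 1) → ℝ) :
    p w ≤ Real.sqrt (∑ j, ∑ i, (QuadraticMap.polar ⇑p (δ i) (δ j)) ^ 2) * (∑ i, (w i) ^ 2) := by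
  set S := ∑ i, (w i) ^ 2 with hS
  have hS0 : 0 ≤ S := Finset.sum_nonneg fun i _ => sq_nonneg _
  set Csq := ∑ j, ∑ i, (QuadraticMap.polar ⇑p (δ i) (δ j)) ^ 2 with hCsq
  have hCsq0 : 0 ≤ Csq := Finset.sum_nonneg fun j _ => Finset.sum_nonneg fun i _ => sq_nonneg _
  have h1 : (QuadraticMap.polar ⇑p w w) ^ 2 ≤ (∑ j, (QuadraticMap.polar ⇑p w (δ j)) ^ 2) * S := by
    simpa using linear_bound (p.polarBilin w) w
  have h2 : ∀ j, (QuadraticMap.polar ⇑p w (δ j)) ^ 2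
      ≤ (∑ i, (QuadraticMap.polar ⇑p (δ i) (δ j)) ^ 2) * S := by
    intro j
    simpa using linear_bound (p.polarBilin.flip (δ j)) w
  have h3 : (QuadraticMap.polar ⇑p w w) ^ 2 ≤ Csq * S ^ 2 := by
    calc (QuadraticMap.polar ⇑p w w) ^ 2
        ≤ (∑ j, (∑ i, (QuadraticMap.polar ⇑p (δ i) (δ j)) ^ 2) * S) * S := by
          refine le_trans h1 (mul_le_mul_of_nonneg_right ?_ hS0)
          exact Finset.sum_le_sum fun j _ => h2 j
      _ = Csq * S ^ 2 := by rw [← Finset.sum_mul]; ring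
  have hpol : QuadraticMap.polar ⇑p w w = 2 * p w := by
    have h4 : p (w + w) = 4 * p w := by
      rw [show w + w = (2:ℝ) • w from (two_smul ℝ w).symm, QuadraticMap.map_smul, smul_eq_mul]
      ring
    rw [QuadraticMap.polar, h4]; ring
  have h5 : (2 * p w) ^ 2 ≤ (Real.sqrt Csq * S) ^ 2 := by
    have he : (Real.sqrt Csq * S) ^ 2 = Csq * S ^ 2 := by
      rw [mul_pow, Real.sq_sqrt hCsq0]
    rw [hpol] at h3
    linarith [h3]
  have h6 : 2 * p w ≤ Real.sqrt Csq * S :=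
    (abs_le_of_sq_le_sq' h5 (by positivity)).2
  nlinarith [Real.sqrt_nonneg Csq, hS0, mul_nonneg (Real.sqrt_nonneg Csq) hS0]

lemma key_choice (c1A c2B D : ℝ) (hc1 : 0 ≤ c1A) (hc2 : 0 ≤ c2B) (hD : 0 < D) :
    ∃ a ∈ Set.Ioo (0:ℝ) 1, c1A * Real.sqrt (2 * a) + c2B * (2 * a) < D := by
  set K := c1A + c2B + 1 with hK
  have hK0 : 0 < K := by linarith
  set a := min (1/2) (D^2 / (2*K^2)) with hadef
  have ha0 : 0 < a := lt_min (by norm_num) (by positivity)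
  have ha1 : a < 1 := lt_of_le_of_lt (min_le_left _ _) (by norm_num)
  have hahalf : a ≤ 1/2 := min_le_left _ _
  have haK : a ≤ D^2/(2*K^2) := min_le_right _ _
  refine ⟨a, ⟨ha0, ha1⟩, ?_⟩
  set u := Real.sqrt (2*a) with hu
  have hu0 : 0 < u := Real.sqrt_pos.mpr (by linarith)
  have hu2 : u^2 = 2*a := Real.sq_sqrt (by linarith)
  have hu1 : u ≤ 1 := by nlinarith [hu2, hahalf, hu0]
  have hKu : K * u ≤ D := by
    have h1 : u^2 ≤ (D/K)^2 := by
      rw [hu2, div_pow]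
      have h2 : 2 * (D^2/(2*K^2)) = D^2 / K^2 := by
        field_simp
      linarith [haK]
    have h2 : u ≤ D/K := (abs_le_of_sq_le_sq' h1 (by positivity)).2
    calc K*u ≤ K*(D/K) := mul_le_mul_of_nonneg_left h2 hK0.le
      _ = D := by field_simp
  have huu : u^2 ≤ u := by nlinarith [hu1, hu0]
  rw [← hu2]
  rw [hK] at hKu
  have h3 : c2B * u^2 ≤ c2B * u := mul_le_mul_of_nonneg_left huu hc2
  linarith

set_option maxHeartbeats 1000000 in
lemma core (p : QuadraticForm ℝ (Fin (n + 1) → ℝ)) (Y : Fin (n + 1) → ℝ)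
    (hY : mink n Y < 0) (hpY : p Y < 0) :
    ∃ a ∈ Set.Ioo (0:ℝ) 1,
      ∀ x, mink n x + (a - 1) * ((mink n (Y + x) - mink n Y - mink n x) / 2) ^ 2 / mink n Y < 0 →
        p x < 0 := by
  have hYne : mink n Y ≠ 0 := ne_of_lt hY
  set σ := ∑ i : Fin n, (Y i.succ) ^ 2 with hσdef
  have hσ0 : 0 ≤ σ := Finset.sum_nonneg fun i _ => sq_nonneg _
  have hYsplit := mink_split Y
  have hY0sq : σ < (Y 0) ^ 2 := by nlinarith [hYsplit]
  have hY0pos : 0 < (Y 0) ^ 2 := lt_of_le_of_lt hσ0 hY0sq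
  have hc1sum : (0:ℝ) ≤ ∑ i, (QuadraticMap.polar ⇑p Y (δ i)) ^ 2 :=
    Finset.sum_nonneg fun i _ => sq_nonneg _
  set c1 := Real.sqrt (∑ i, (QuadraticMap.polar ⇑p Y (δ i)) ^ 2) with hc1def
  have hc10 : 0 ≤ c1 := Real.sqrt_nonneg _
  set c2 := Real.sqrt (∑ j, ∑ i, (QuadraticMap.polar ⇑p (δ i) (δ j)) ^ 2) with hc2def
  have hc20 : 0 ≤ c2 := Real.sqrt_nonneg _
  set D := -(p Y) with hDdef
  have hD : 0 < D := by simp [hDdef]; linarith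
  obtain ⟨a, haI, hkey⟩ := key_choice (c1 * |Y 0|) (c2 * (Y 0)^2) D
      (mul_nonneg hc10 (abs_nonneg _)) (mul_nonneg hc20 hY0pos.le) hD
  refine ⟨a, haI, ?_⟩
  obtain ⟨ha0, ha1⟩ := haI
  intro x hx
  rw [polar_mink] at hx
  set t := mb Y x / mink n Y with htdef
  set w := x - t • Y with hwdef
  have hxw : x = w + t • Y := by rw [hwdef]; abel
  have hbx : mb Y x = t * mink n Y := by rw [htdef]; field_simp
  have hbw : mb Y w = 0 := by rw [hwdef, mb_sub_smul, hbx]; ring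
  have hmx : mink n x = mink n w + t ^ 2 * mink n Y := by
    rw [hxw, mink_add_smul, hbw]; ring
  have hx' : mink n w + a * t ^ 2 * mink n Y < 0 := by
    have he : (a - 1) * (mb Y x) ^ 2 / mink n Y = (a - 1) * t ^ 2 * mink n Y := by
      rw [hbx]; field_simp
    rw [hmx, he] at hx
    linarith
  set s' := ∑ i : Fin n, (w i.succ) ^ 2 with hs'def
  have hs'0 : 0 ≤ s' := Finset.sum_nonneg fun i _ => sq_nonneg _
  have hCS : (∑ i : Fin n, Y i.succ * w i.succ) ^ 2 ≤ σ * s' :=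
    Finset.sum_mul_sq_le_sq_mul_sq _ _ _
  have hcr : Y 0 * w 0 = ∑ i : Fin n, Y i.succ * w i.succ := by
    have h := mb_split Y w
    rw [hbw] at h
    linarith
  have hw0 : (Y 0) ^ 2 * (w 0) ^ 2 ≤ σ * s' := by
    calc (Y 0)^2 * (w 0)^2 = (Y 0 * w 0)^2 := by ring
      _ = (∑ i : Fin n, Y i.succ * w i.succ)^2 := by rw [hcr]
      _ ≤ σ * s' := hCS
  have hwsplit := mink_split w
  have hs'lt : s' * ((Y 0)^2 - σ) ≤ (Y 0)^2 * mink n w := by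
    rw [hwsplit]; nlinarith [hw0]
  have hminkw : 0 ≤ mink n w := by
    have h := le_trans (mul_nonneg hs'0 (sub_nonneg.mpr hY0sq.le)) hs'lt
    nlinarith [h, hY0pos]
  have hμ : -(mink n Y) = (Y 0)^2 - σ := by linarith [hYsplit]
  have ht2 : 0 < t ^ 2 := by
    rcases eq_or_ne t 0 with h | h
    · exfalso
      rw [h] at hx'
      simp at hx'
      linarith
    · positivity
  have hw0le : (w 0)^2 ≤ s' := by
    have h1 : (Y 0)^2 * (w 0)^2 ≤ (Y 0)^2 * s' := by nlinarith [hw0, mul_nonneg (sub_nonneg.mpr hY0sq.le) hs'0]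
    exact le_of_mul_le_mul_left h1 hY0pos
  have hminkw_lt : mink n w < a * t^2 * ((Y 0)^2 - σ) := by
    rw [← hμ]; linarith
  have hs'bound : s' < (Y 0)^2 * (a * t^2) := by
    have h1 := mul_lt_mul_of_pos_left hminkw_lt hY0pos
    have h2 : s' * ((Y 0)^2 - σ) < (Y 0)^2 * (a * t^2) * ((Y 0)^2 - σ) := by
      calc s' * ((Y 0)^2 - σ) ≤ (Y 0)^2 * mink n w := hs'lt
        _ < (Y 0)^2 * (a * t^2 * ((Y 0)^2 - σ)) := h1
        _ = (Y 0)^2 * (a * t^2) * ((Y 0)^2 - σ) := by ring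
    exact lt_of_mul_lt_mul_right h2 (sub_nonneg.mpr hY0sq.le)
  have hSle : (∑ i, (w i)^2) ≤ 2 * ((Y 0)^2 * (a * t^2)) := by
    rw [sum_sq_split]
    linarith
  have hpx : p x = p w + t^2 * p Y + t * QuadraticMap.polar ⇑p Y w := by
    conv_lhs => rw [hxw]
    have h1 := QuadraticMap.map_add ⇑p w (t • Y)
    have h2 : p (t • Y) = t^2 * p Y := by
      rw [QuadraticMap.map_smul, smul_eq_mul]; ring
    have h3 : QuadraticMap.polar ⇑p w (t • Y) = t * QuadraticMap.polar ⇑p Y w := by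
      rw [QuadraticMap.polar_smul_right, QuadraticMap.polar_comm, smul_eq_mul]
    rw [h1, h2, h3]
  have hS0 : (0:ℝ) ≤ ∑ i, (w i)^2 := Finset.sum_nonneg fun i _ => sq_nonneg _
  have hterm1 : t * QuadraticMap.polar ⇑p Y w ≤ t^2 * (c1 * |Y 0| * Real.sqrt (2*a)) := by
    have hb := linear_bound (p.polarBilin Y) w
    simp only [QuadraticMap.polarBilin_apply_apply] at hb
    have h1 : (QuadraticMap.polar ⇑p Y w)^2 ≤ c1^2 * (∑ i, (w i)^2) := by
      rw [hc1def, Real.sq_sqrt hc1sum]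
      linarith [hb]
    have hsq2a : (Real.sqrt (2*a))^2 = 2*a := Real.sq_sqrt (by linarith)
    have habs : |Y 0|^2 = (Y 0)^2 := sq_abs _
    have hrhs : (t^2 * (c1 * |Y 0| * Real.sqrt (2*a)))^2
        = t^4 * (c1^2 * ((Y 0)^2 * (2*a))) := by
      calc (t^2 * (c1 * |Y 0| * Real.sqrt (2*a)))^2
          = (t^2)^2 * (c1^2 * (|Y 0|^2 * (Real.sqrt (2*a))^2)) := by ring
        _ = t^4 * (c1^2 * ((Y 0)^2 * (2*a))) := by rw [hsq2a, habs]; ring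
    have hsq : (t * QuadraticMap.polar ⇑p Y w)^2 ≤ (t^2 * (c1 * |Y 0| * Real.sqrt (2*a)))^2 := by
      rw [hrhs]
      have h2 := mul_le_mul_of_nonneg_left h1 (sq_nonneg t)
      have h3 := mul_le_mul_of_nonneg_left hSle (mul_nonneg (sq_nonneg t) (sq_nonneg c1))
      calc (t * QuadraticMap.polar ⇑p Y w)^2
          = t^2 * (QuadraticMap.polar ⇑p Y w)^2 := by ring
        _ ≤ t^2 * (c1^2 * (∑ i, (w i)^2)) := h2
        _ = t^2 * c1^2 * (∑ i, (w i)^2) := by ring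
        _ ≤ t^2 * c1^2 * (2 * ((Y 0)^2 * (a * t^2))) := h3
        _ = t^4 * (c1^2 * ((Y 0)^2 * (2*a))) := by ring
    exact (abs_le_of_sq_le_sq' hsq (by positivity)).2
  have hterm2 : p w ≤ t^2 * (c2 * (Y 0)^2 * (2*a)) := by
    have hb := quad_bound p w
    rw [← hc2def] at hb
    have h := mul_le_mul_of_nonneg_left hSle hc20
    calc p w ≤ c2 * (∑ i, (w i)^2) := hb
      _ ≤ c2 * (2 * ((Y 0)^2 * (a * t^2))) := h
      _ = t^2 * (c2 * (Y 0)^2 * (2*a)) := by ring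
  have hfin := mul_lt_mul_of_pos_left hkey ht2
  rw [hDdef] at hfin
  have h9 : p x ≤ t^2 * (c1 * |Y 0| * Real.sqrt (2*a) + c2 * (Y 0)^2 * (2*a)) + t^2 * p Y := by
    rw [hpx]
    have he : t^2 * (c1 * |Y 0| * Real.sqrt (2*a) + c2 * (Y 0)^2 * (2*a))
        = t^2 * (c1 * |Y 0| * Real.sqrt (2*a)) + t^2 * (c2 * (Y 0)^2 * (2*a)) := by ring
    rw [he]
    linarith [hterm1, hterm2]
  have h10 : t^2 * (c1 * |Y 0| * Real.sqrt (2*a) + c2 * (Y 0)^2 * (2*a)) < t^2 * -(p Y) := hfin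
  nlinarith [h9, h10]

end ConeSqueeze

/-- Pointwise cone-shrinking step in the proof of Proposition 4.4: if `q, q′` are
Lorentzian and `X` is timelike for both, then for some `a ∈ (0,1)` the open light cone of
`q_a(v) := q(v) + (a−1)·B(X,v)²/q(X)` is contained in the open light cone of `q′`. -/
theorem exists_squeezed_cone_in_cone {n : ℕ} (hn : 1 ≤ n)
    {V : Type*} [AddCommGroup V] [Module ℝ V]
    (q q' : QuadraticForm ℝ V)
    (hq : IsLorentzian n ⇑q) (hq' : IsLorentzian n ⇑q')
    (X : V) (hX : q X < 0) (hX' : q' X < 0) :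
    ∃ a ∈ Set.Ioo (0 : ℝ) 1,
      {v : V | q v + (a - 1) * (polarForm q X v) ^ 2 / q X < 0} ⊆ {v : V | q' v < 0} := by
  obtain ⟨e, he⟩ := hq
  have hqv : ∀ v : V, q v = mink n (e.symm v) := fun v => by
    conv_lhs => rw [← e.apply_symm_apply v]
    exact he _
  set p : QuadraticForm ℝ (Fin (n + 1) → ℝ) :=
    q'.comp (e : (Fin (n + 1) → ℝ) →ₗ[ℝ] V) with hp
  have hpx : ∀ x, p x = q' (e x) := fun x => by
    simp [hp, QuadraticMap.comp_apply]
  have hYm : mink n (e.symm X) < 0 := by rw [← hqv X]; exact hX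
  have hpY : p (e.symm X) < 0 := by rw [hpx, e.apply_symm_apply]; exact hX'
  obtain ⟨a, haI, hcore⟩ := ConeSqueeze.core p (e.symm X) hYm hpY
  refine ⟨a, haI, fun v hv => ?_⟩
  simp only [Set.mem_setOf_eq] at hv ⊢
  have h1 : q' v = p (e.symm v) := by rw [hpx, e.apply_symm_apply]
  rw [h1]
  apply hcore (e.symm v)
  have h2 : polarForm q X v
      = (mink n (e.symm X + e.symm v) - mink n (e.symm X) - mink n (e.symm v)) / 2 := by
    rw [polarForm, hqv (X + v), hqv X, hqv v, map_add]
  rw [← h2, ← hqv v, ← hqv X]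
  exact hv
end
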